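/- arXiv:1811.05440 — 7 statements merged into one kernel-verified Lean document; each statement's English description precedes it below -/
import Mathlib

section
/- Let A and B be disjoint nonempty finite sets of integers of sizes a and b. For any bijective words u ∈ S_A and v ∈ S_B, the number of cyclic shuffles of the cyclic equivalence classes [u] and [v] equals (a+b−1)! / ((a−1)!(b−1)!). -/
/-!
Rotating a shuffle of rotations of `u` and `v` by one position gives again a shuffle of
rotations of `u` and `v`: the first letter moves from the front of its word to the back.
Hence the cyclic shuffles are exactly the shuffles of a rotation of `u` with a rotation of `v`,
and such a word is determined by the set of positions of the letters of `u` together with the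
two rotations, giving `C(a+b, a) * a * b` words. These words are injective, so every cyclic
class contains exactly `a + b` of them, and there are `C(a+b, a) * a * b / (a + b)
= (a+b-1)! / ((a-1)! (b-1)!)` classes.
-/

open Finset

namespace CQSym

/-- The exponent-vector (weight) of a word with letters among the positive
integers: the monomial `x_{w 0} ⋯ x_{w (n-1)}`. -/
noncomputable def wt {n : ℕ} (w : Fin n → ℕ+) : ℕ+ →₀ ℕ := ∑ i, Finsupp.single (w i) 1

/-- The fundamental quasi-symmetric function `F_{n,J}` for `J ⊆ [n-1]`
(1-based positions): the sum of `x_{w 0} ⋯ x_{w (n-1)}` over weakly increasing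
words with a strict ascent at every position of `J`. -/
noncomputable def Fqsym (n : ℕ) (J : Finset ℕ) : MvPowerSeries ℕ+ ℤ :=
  fun d => (Nat.card {w : Fin n → ℕ+ //
    Monotone w ∧ (∀ i : Fin n, (i : ℕ) + 1 ∈ J → w i < w (finRotate n i)) ∧
    wt w = d} : ℤ)

/-- The monomial quasi-symmetric function `M_{n,J}` for `J ⊆ [n-1]`:
the sum over weakly increasing words with a strict ascent exactly at the
positions of `J`. -/
noncomputable def Mqsym (n : ℕ) (J : Finset ℕ) : MvPowerSeries ℕ+ ℤ :=
  fun d => (Nat.card {w : Fin n → ℕ+ //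
    Monotone w ∧
    (∀ i : Fin n, (i : ℕ) + 1 < n → (((i : ℕ) + 1 ∈ J) ↔ w i < w (finRotate n i))) ∧
    wt w = d} : ℤ)

/-- The fundamental cyclic quasi-symmetric function `F^cyc_{n,J}` for
`J ⊆ [n]` (1-based positions): the sum of `x_{w 0} ⋯ x_{w (n-1)}` over pairs
`(w, k)` such that `w` is cyclically weakly increasing from position `k`
and has a (cyclic) strict ascent at every position of `J` except possibly
at the position just before `k`. -/
noncomputable def cFqsym (n : ℕ) (J : Finset ℕ) : MvPowerSeries ℕ+ ℤ :=
  fun d => (Nat.card {p : (Fin n → ℕ+) × Fin n //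
    Monotone (fun i : Fin n => p.1 (p.2 + i)) ∧
    (∀ i : Fin n, (i : ℕ) + 1 ∈ J → i ≠ (finRotate n).symm p.2 →
      p.1 i < p.1 (finRotate n i)) ∧
    wt p.1 = d} : ℤ)

/-- The monomial cyclic quasi-symmetric function `M^cyc_{n,J}` for
`J ⊆ [n]`: the sum of `x_{w 0} ⋯ x_{w (n-1)}` over pairs `(w, k)` such that
`w` is cyclically weakly increasing from position `k`, the position just
before `k` belongs to `J`, and at every other position the (cyclic) strict
ascents of `w` are exactly the positions of `J`. -/
noncomputable def cMqsym (n : ℕ) (J : Finset ℕ) : MvPowerSeries ℕ+ ℤ :=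
  fun d => (Nat.card {p : (Fin n → ℕ+) × Fin n //
    Monotone (fun i : Fin n => p.1 (p.2 + i)) ∧
    (((finRotate n).symm p.2 : Fin n) : ℕ) + 1 ∈ J ∧
    (∀ i : Fin n, i ≠ (finRotate n).symm p.2 →
      (((i : ℕ) + 1 ∈ J) ↔ p.1 i < p.1 (finRotate n i))) ∧
    wt p.1 = d} : ℤ)

/-- The cyclic shift `J - i` of a subset `J ⊆ [n]`, computed modulo `n`,
with representatives `1, …, n`. -/
def cshift (n : ℕ) (J : Finset ℕ) (i : ℕ) : Finset ℕ :=
  J.image fun j => (j + n - i - 1) % n + 1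

/-- The complete homogeneous symmetric function `h_n`: the sum of all
monomials of degree `n`. -/
noncomputable def hqsym (n : ℕ) : MvPowerSeries ℕ+ ℤ :=
  fun d => if d.sum (fun _ e => e) = n then 1 else 0

open scoped Classical in
/-- The elementary symmetric function `e_n`: the sum of all squarefree
monomials of degree `n`. -/
noncomputable def eqsym (n : ℕ) : MvPowerSeries ℕ+ ℤ :=
  fun d => if d.sum (fun _ e => e) = n ∧ ∀ x, d x ≤ 1 then 1 else 0

/-- The Schur function of hook shape `(n-k, 1^k)`, defined via semistandard
tableaux: a weakly increasing first row of length `n-k`, a strictly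
increasing leg of length `k` below its first cell. -/
noncomputable def hookSchur (n k : ℕ) : MvPowerSeries ℕ+ ℤ :=
  fun d => (Nat.card {p : (Fin (n - k) → ℕ+) × (Fin k → ℕ+) //
    Monotone p.1 ∧ StrictMono p.2 ∧
    (∀ (h1 : 0 < n - k) (h2 : 0 < k), p.1 ⟨0, h1⟩ < p.2 ⟨0, h2⟩) ∧
    wt p.1 + wt p.2 = d} : ℤ)

/-- The descent number of a word with (distinct) integer letters. -/
def des {N : ℕ} (w : Fin N → ℤ) : ℕ :=
  (Finset.univ.filter fun i : Fin N => (i : ℕ) + 1 < N ∧ w (finRotate N i) < w i).card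

/-- The cyclic descent number of a word with (distinct) integer letters. -/
def cdes {N : ℕ} (w : Fin N → ℤ) : ℕ :=
  (Finset.univ.filter fun i : Fin N => w (finRotate N i) < w i).card

/-- `w` is a shuffle of `u` and `v`. -/
def IsShuffle {m n : ℕ} (u : Fin m → ℤ) (v : Fin n → ℤ) (w : Fin (m + n) → ℤ) : Prop :=
  ∃ (f : Fin m → Fin (m + n)) (g : Fin n → Fin (m + n)),
    StrictMono f ∧ StrictMono g ∧ (∀ i, w (f i) = u i) ∧ (∀ j, w (g j) = v j) ∧
    (∀ x, (∃ i, f i = x) ∨ (∃ j, g j = x))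

/-- The cyclic class `[w]` is a cyclic shuffle of `[u]` and `[v]`: some
cyclic rotation of `w` is a shuffle of cyclic rotations of `u` and `v`. -/
def IsCyclicShuffle {m n : ℕ} (u : Fin m → ℤ) (v : Fin n → ℤ) (w : Fin (m + n) → ℤ) : Prop :=
  ∃ (kw : Fin (m + n)) (ku : Fin m) (kv : Fin n),
    IsShuffle (fun i => u (i + ku)) (fun i => v (i + kv)) (fun i => w (i + kw))

/-- Rotation equivalence of words satisfying a property `P`;  `Quot` of this
relation is the set of cyclic equivalence classes. -/
def RotRel {N : ℕ} (P : (Fin N → ℤ) → Prop) (w₁ w₂ : {w : Fin N → ℤ // P w}) : Prop :=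
  ∃ k : Fin N, ∀ i, w₁.val i = w₂.val (i + k)

/-- Binomial coefficient with integer upper and lower arguments, zero for
negative lower argument. -/
noncomputable def zchoose (a b : ℤ) : ℤ := if 0 ≤ b then Ring.choose a b.toNat else 0

/-- The map `Ψ`, sending a monomial `x_{i₁}^{m₁} ⋯ x_{i_k}^{m_k}`
(`i₁ < … < i_k`) to `q^{i_k}`, extended linearly. -/
noncomputable def psi (f : MvPowerSeries ℕ+ ℤ) : PowerSeries ℤ :=
  PowerSeries.mk fun r =>
    if r = 0 then MvPowerSeries.coeff 0 f
    else ∑ᶠ d ∈ {d : ℕ+ →₀ ℕ |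
        ∃ m ∈ d.support, (∀ m' ∈ d.support, m' ≤ m) ∧ (m : ℕ) = r},
      MvPowerSeries.coeff d f

/-- The product `⊙` on `ℤ[[q]]` determined by `q^i ⊙ q^j = q^{max(i,j)}`. -/
noncomputable def odot (a b : PowerSeries ℤ) : PowerSeries ℤ :=
  PowerSeries.mk fun r =>
    (PowerSeries.coeff r a) * (∑ s ∈ Finset.range (r + 1), PowerSeries.coeff s b) +
    (∑ s ∈ Finset.range r, PowerSeries.coeff s a) * (PowerSeries.coeff r b)

/-- A multivariate power series of bounded (total) degree. -/
def BoundedDeg (f : MvPowerSeries ℕ+ ℤ) : Prop :=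
  ∃ D, ∀ d : ℕ+ →₀ ℕ, D < d.sum (fun _ e => e) → MvPowerSeries.coeff d f = 0

/-- Cellini's cyclic descent set of a permutation (0-based positions). -/
def cDesF {n : ℕ} (w : Fin n → Fin n) : Finset (Fin n) :=
  Finset.univ.filter fun i => w (finRotate n i) < w i

/-- The ordinary descent set of a permutation (0-based positions). -/
def DesF {n : ℕ} (w : Fin n → Fin n) : Finset (Fin n) :=
  Finset.univ.filter fun i => (i : ℕ) + 1 < n ∧ w (finRotate n i) < w i

open scoped Nat

theorem strictMono_sub_one_of_ne_zero {m N : ℕ} [NeZero N] {g : Fin m → Fin N}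
    (hg : StrictMono g) (h0 : ∀ j, g j ≠ 0) : StrictMono (fun j => g j - 1) := by
  intro i j hij
  have hgij := hg hij
  have hgi := Fin.pos_iff_ne_zero.2 (h0 i)
  rw [Fin.lt_def] at hgij hgi ⊢
  rw [Fin.val_sub_one_of_ne_zero (h0 i), Fin.val_sub_one_of_ne_zero (h0 j)]
  omega

theorem strictMono_rotate_sub_one {m N : ℕ} [NeZero m] [NeZero N] {f : Fin m → Fin N}
    (hf : StrictMono f) (h0 : f 0 = 0) : StrictMono (fun i => f (i + 1) - 1) := by
  obtain ⟨n, rfl⟩ : ∃ n, N = n + 1 :=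
    ⟨N - 1, (Nat.succ_pred_eq_of_ne_zero (NeZero.ne N)).symm⟩
  have hf0 : ∀ i, f i = 0 ↔ i = 0 := fun i => h0 ▸ hf.injective.eq_iff
  intro i j hij
  have hi : (i : ℕ) + 1 < m := by omega
  have hi1 : (i + 1 : Fin m) ≠ 0 := by
    rw [ne_eq, Fin.ext_iff, Fin.val_add_one_of_lt' hi]; simp
  have hfi := Fin.pos_iff_ne_zero.2 ((hf0 _).not.2 hi1)
  dsimp only
  rw [Fin.lt_def, Fin.coe_sub_one, Fin.coe_sub_one, if_neg ((hf0 _).not.2 hi1)]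
  rcases Nat.lt_or_ge ((j : ℕ) + 1) m with hj | hj
  · have hj1 : (j + 1 : Fin m) ≠ 0 := by
      rw [ne_eq, Fin.ext_iff, Fin.val_add_one_of_lt' hj]; simp
    have hlt : f (i + 1) < f (j + 1) := hf <| by
      rw [Fin.lt_def, Fin.val_add_one_of_lt' hi, Fin.val_add_one_of_lt' hj]; omega
    rw [if_neg ((hf0 _).not.2 hj1)]
    rw [Fin.lt_def] at hfi hlt
    omega
  · have hj1 : (j + 1 : Fin m) = 0 := by
      rw [Fin.ext_iff, Fin.val_add, Fin.val_one', Nat.add_mod_mod]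
      simp [show (j : ℕ) + 1 = m by omega]
    rw [if_pos ((hf0 _).2 hj1)]
    have := (f (i + 1)).isLt
    omega

section Shuffle

variable {a b : ℕ} {u : Fin a → ℤ} {v : Fin b → ℤ} {w : Fin (a + b) → ℤ}

theorem IsShuffle.rotate_one [NeZero a] [NeZero b] (hdisj : ∀ i j, u i ≠ v j)
    (h : IsShuffle u v w) :
    IsShuffle (fun i => u (i + 1)) v (fun x => w (x + 1)) ∨
      IsShuffle u (fun j => v (j + 1)) (fun x => w (x + 1)) := by
  obtain ⟨f, g, hf, hg, hwf, hwg, hcov⟩ := h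
  rcases hcov 0 with ⟨i, hi⟩ | ⟨j, hj⟩
  · have hf0 : f 0 = 0 := le_antisymm (hi ▸ hf.monotone (Fin.zero_le i)) (Fin.zero_le _)
    have hg0 : ∀ j, g j ≠ 0 := fun j hj => hdisj 0 j (by rw [← hwf, ← hwg, hf0, hj])
    refine .inl ⟨fun i => f (i + 1) - 1, fun j => g j - 1, strictMono_rotate_sub_one hf hf0,
      strictMono_sub_one_of_ne_zero hg hg0, by simp [hwf], by simp [hwg], fun x => ?_⟩
    rcases hcov (x + 1) with ⟨i, hi⟩ | ⟨j, hj⟩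
    · exact .inl ⟨i - 1, by simp [hi]⟩
    · exact .inr ⟨j, by simp [hj]⟩
  · have hg0 : g 0 = 0 := le_antisymm (hj ▸ hg.monotone (Fin.zero_le j)) (Fin.zero_le _)
    have hf0 : ∀ i, f i ≠ 0 := fun i hi => hdisj i 0 (by rw [← hwf, ← hwg, hg0, hi])
    refine .inr ⟨fun i => f i - 1, fun j => g (j + 1) - 1, strictMono_sub_one_of_ne_zero hf hf0,
      strictMono_rotate_sub_one hg hg0, by simp [hwf], by simp [hwg], fun x => ?_⟩
    rcases hcov (x + 1) with ⟨i, hi⟩ | ⟨j, hj⟩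
    · exact .inl ⟨i, by simp [hi]⟩
    · exact .inr ⟨j - 1, by simp [hj]⟩

def IsShuffleOfRotations (u : Fin a → ℤ) (v : Fin b → ℤ) (w : Fin (a + b) → ℤ) : Prop :=
  ∃ (ku : Fin a) (kv : Fin b), IsShuffle (fun i => u (i + ku)) (fun j => v (j + kv)) w

theorem IsShuffleOfRotations.rotate_one [NeZero a] [NeZero b] (hdisj : ∀ i j, u i ≠ v j)
    (h : IsShuffleOfRotations u v w) : IsShuffleOfRotations u v (fun x => w (x + 1)) := by
  obtain ⟨ku, kv, hw⟩ := h
  rcases hw.rotate_one (fun i j => hdisj _ _) with hw' | hw'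
  · exact ⟨1 + ku, kv, by simpa only [add_assoc] using hw'⟩
  · exact ⟨ku, 1 + kv, by simpa only [add_assoc] using hw'⟩

open Fin.NatCast in
theorem IsShuffleOfRotations.rotate [NeZero a] [NeZero b] (hdisj : ∀ i j, u i ≠ v j)
    (h : IsShuffleOfRotations u v w) (k : Fin (a + b)) :
    IsShuffleOfRotations u v (fun x => w (x + k)) := by
  suffices ∀ n : ℕ, ∀ w, IsShuffleOfRotations u v w →
      IsShuffleOfRotations u v (fun x => w (x + (n : Fin (a + b)))) by
    simpa only [Fin.cast_val_eq_self] using this k w h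
  intro n
  induction n with
  | zero => simp
  | succ n ih =>
    intro w hw
    simpa only [Nat.cast_succ, add_comm _ (1 : Fin (a + b)), ← add_assoc] using
      (ih w hw).rotate_one hdisj

theorem isCyclicShuffle_iff [NeZero a] [NeZero b] (hdisj : ∀ i j, u i ≠ v j) :
    IsCyclicShuffle u v w ↔ IsShuffleOfRotations u v w := by
  constructor
  · rintro ⟨kw, ku, kv, hw⟩
    simpa using IsShuffleOfRotations.rotate hdisj ⟨ku, kv, hw⟩ (-kw)
  · rintro ⟨ku, kv, hw⟩
    exact ⟨0, ku, kv, by simpa using hw⟩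

theorem card_compl_eq_of_card_eq {S : Finset (Fin (a + b))} (hS : #S = a) : #Sᶜ = b := by
  rw [card_compl, hS, Fintype.card_fin, Nat.add_sub_cancel_left]

noncomputable def positionsEquiv (S : {S : Finset (Fin (a + b)) // #S = a}) :
    Fin a ⊕ Fin b ≃ Fin (a + b) :=
  finSumEquivOfFinset S.2 (card_compl_eq_of_card_eq S.2)

theorem exists_positionsEquiv_inl_eq {S : {S : Finset (Fin (a + b)) // #S = a}} {x : Fin (a + b)}
    (hx : x ∈ S.1) : ∃ i, positionsEquiv S (.inl i) = x :=
  ⟨(S.1.orderIsoOfFin S.2).symm ⟨x, hx⟩,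
    by simp [positionsEquiv, ← coe_orderIsoOfFin_apply]⟩

theorem exists_positionsEquiv_inr_eq {S : {S : Finset (Fin (a + b)) // #S = a}} {x : Fin (a + b)}
    (hx : x ∉ S.1) : ∃ j, positionsEquiv S (.inr j) = x :=
  ⟨(S.1ᶜ.orderIsoOfFin (card_compl_eq_of_card_eq S.2)).symm ⟨x, mem_compl.2 hx⟩,
    by simp [positionsEquiv, ← coe_orderIsoOfFin_apply]⟩

noncomputable def interleave (u : Fin a → ℤ) (v : Fin b → ℤ)
    (S : {S : Finset (Fin (a + b)) // #S = a}) : Fin (a + b) → ℤ :=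
  Sum.elim u v ∘ (positionsEquiv S).symm

@[simp]
theorem interleave_positionsEquiv_inl (S : {S : Finset (Fin (a + b)) // #S = a}) (i : Fin a) :
    interleave u v S (positionsEquiv S (.inl i)) = u i := by
  simp [interleave]

@[simp]
theorem interleave_positionsEquiv_inr (S : {S : Finset (Fin (a + b)) // #S = a}) (j : Fin b) :
    interleave u v S (positionsEquiv S (.inr j)) = v j := by
  simp [interleave]

theorem isShuffle_interleave (S : {S : Finset (Fin (a + b)) // #S = a}) :
    IsShuffle u v (interleave u v S) := by
  refine ⟨_, _, (S.1.orderEmbOfFin S.2).strictMono,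
    (S.1ᶜ.orderEmbOfFin (card_compl_eq_of_card_eq S.2)).strictMono,
    interleave_positionsEquiv_inl S, interleave_positionsEquiv_inr S, fun x => ?_⟩
  by_cases hx : x ∈ S.1
  · exact .inl (exists_positionsEquiv_inl_eq hx)
  · exact .inr (exists_positionsEquiv_inr_eq hx)

theorem IsShuffle.exists_interleave_eq (hdisj : ∀ i j, u i ≠ v j) (h : IsShuffle u v w) :
    ∃ S, interleave u v S = w := by
  obtain ⟨f, g, hf, hg, hwf, hwg, -⟩ := h
  let S : Finset (Fin (a + b)) := univ.map ⟨f, hf.injective⟩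
  have hS : #S = a := by simp [S]
  have hfS : f = S.orderEmbOfFin hS := orderEmbOfFin_unique hS (by simp [S]) hf
  have hgS : g = Sᶜ.orderEmbOfFin (card_compl_eq_of_card_eq hS) :=
    orderEmbOfFin_unique _ (fun j => by
      simpa [S] using fun i hi => hdisj i j (by rw [← hwf, ← hwg, hi])) hg
  refine ⟨⟨S, hS⟩, (Equiv.comp_symm_eq _ _ _).2 (funext fun x => ?_)⟩
  rcases x with i | j
  · simp [positionsEquiv, ← hfS, hwf]
  · simp [positionsEquiv, ← hgS, hwg]

theorem interleave_rotations_injective [NeZero a] [NeZero b] (hu : Function.Injective u)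
    (hv : Function.Injective v) (hdisj : ∀ i j, u i ≠ v j) :
    Function.Injective fun p : {S : Finset (Fin (a + b)) // #S = a} × Fin a × Fin b =>
      interleave (fun i => u (i + p.2.1)) (fun j => v (j + p.2.2)) p.1 := by
  rintro ⟨S, ku, kv⟩ ⟨T, ku', kv'⟩ h
  dsimp only at h
  obtain rfl : S = T := by
    refine Subtype.ext (eq_of_subset_of_card_le (fun x hxS => ?_) (by rw [S.2, T.2]))
    by_contra hxT
    obtain ⟨i, rfl⟩ := exists_positionsEquiv_inl_eq hxS
    obtain ⟨j, hj⟩ := exists_positionsEquiv_inr_eq hxT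
    have hx := congrFun h (positionsEquiv S (.inl i))
    rw [interleave_positionsEquiv_inl, ← hj, interleave_positionsEquiv_inr] at hx
    exact hdisj _ _ hx
  have hku := congrFun h (positionsEquiv S (.inl 0))
  have hkv := congrFun h (positionsEquiv S (.inr 0))
  simp only [interleave_positionsEquiv_inl, interleave_positionsEquiv_inr, zero_add] at hku hkv
  rw [hu hku, hv hkv]

theorem IsShuffleOfRotations.injective (hu : Function.Injective u) (hv : Function.Injective v)
    (hdisj : ∀ i j, u i ≠ v j) (h : IsShuffleOfRotations u v w) : Function.Injective w := by
  obtain ⟨ku, kv, hw⟩ := h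
  obtain ⟨S, rfl⟩ := hw.exists_interleave_eq fun i j => hdisj _ _
  exact ((hu.comp (add_left_injective ku)).sumElim (hv.comp (add_left_injective kv))
    fun i j => hdisj _ _).comp (positionsEquiv S).symm.injective

theorem card_isShuffleOfRotations [NeZero a] [NeZero b] (hu : Function.Injective u)
    (hv : Function.Injective v) (hdisj : ∀ i j, u i ≠ v j) :
    Nat.card {w // IsShuffleOfRotations u v w} = (a + b).choose a * (a * b) := by
  let F (p : {S : Finset (Fin (a + b)) // #S = a} × Fin a × Fin b) :
      {w // IsShuffleOfRotations u v w} :=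
    ⟨interleave (fun i => u (i + p.2.1)) (fun j => v (j + p.2.2)) p.1,
      p.2.1, p.2.2, isShuffle_interleave p.1⟩
  have hF : Function.Bijective F := by
    refine ⟨fun _ _ h => interleave_rotations_injective hu hv hdisj (congrArg Subtype.val h),
      ?_⟩
    rintro ⟨w, ku, kv, hw⟩
    obtain ⟨S, hS⟩ := hw.exists_interleave_eq fun i j => hdisj _ _
    exact ⟨(S, ku, kv), Subtype.ext hS⟩
  rw [← Nat.card_eq_of_bijective F hF]
  simp [Nat.card_eq_fintype_card, Fintype.card_finset_len]

end Shuffle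

theorem rotRel_equivalence {N : ℕ} [NeZero N] (P : (Fin N → ℤ) → Prop) :
    Equivalence (RotRel P) where
  refl _ := ⟨0, fun i => by rw [add_zero]⟩
  symm := fun ⟨k, hk⟩ => ⟨-k, fun i => by rw [hk, neg_add_cancel_right]⟩
  trans := fun ⟨k, hk⟩ ⟨l, hl⟩ => ⟨k + l, fun i => by rw [hk, hl, add_assoc]⟩

theorem card_quot_rotRel_mul {N : ℕ} [NeZero N] {P : (Fin N → ℤ) → Prop}
    (hrot : ∀ w, P w → ∀ k, P fun i => w (i + k))
    (hinj : ∀ w, P w → Function.Injective w) :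
    Nat.card (Quot (RotRel P)) * N = Nat.card {w // P w} := by
  let F (c : Quot (RotRel P) × Fin N) : {w // P w} :=
    ⟨fun i => c.1.out.1 (i + c.2), hrot _ c.1.out.2 c.2⟩
  have hF : Function.Bijective F := by
    constructor
    · rintro ⟨c, k⟩ ⟨d, l⟩ h
      have h' : ∀ i, c.out.1 (i + k) = d.out.1 (i + l) := congrFun (congrArg Subtype.val h)
      obtain rfl : c = d := by
        rw [← c.out_eq, ← d.out_eq]
        exact Quot.sound ⟨l - k, fun i => by
          simpa only [sub_add_cancel, sub_add_eq_add_sub, add_sub_assoc] using h' (i - k)⟩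
      obtain rfl : k = l := by
        simpa using hinj _ c.out.2 (by simpa using h' 0)
      rfl
    · intro w
      obtain ⟨k, hk⟩ := (rotRel_equivalence P).eqvGen_iff.1
        (Quot.eqvGen_exact (Quot.mk (RotRel P) w).out_eq)
      exact ⟨(Quot.mk _ w, -k), Subtype.ext (funext fun i => by simp [F, hk])⟩
  rw [← Nat.card_eq_of_bijective F hF, Nat.card_prod, Nat.card_eq_fintype_card (α := Fin N),
    Fintype.card_fin]

theorem eq_factorial_div_of_mul_eq {a b c : ℕ} (ha : 0 < a) (hb : 0 < b)
    (h : c * (a + b) = (a + b).choose a * (a * b)) :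
    c = (a + b - 1)! / ((a - 1)! * (b - 1)!) := by
  obtain ⟨a, rfl⟩ := Nat.exists_eq_add_one.2 ha
  obtain ⟨b, rfl⟩ := Nat.exists_eq_add_one.2 hb
  have hfac := Nat.choose_mul_factorial_mul_factorial (Nat.le_add_right (a + 1) (b + 1))
  rw [Nat.add_sub_cancel_left] at hfac
  rw [show a + 1 + (b + 1) - 1 = a + b + 1 by omega, Nat.add_sub_cancel, Nat.add_sub_cancel]
  refine (Nat.div_eq_of_eq_mul_left (by positivity) ?_).symm
  apply Nat.eq_of_mul_eq_mul_right (show 0 < a + 1 + (b + 1) by omega)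
  calc (a + b + 1)! * (a + 1 + (b + 1)) = (a + 1 + (b + 1))! := by
        rw [show a + 1 + (b + 1) = a + b + 1 + 1 by ring, Nat.factorial_succ (a + b + 1)]; ring
    _ = (a + 1 + (b + 1)).choose (a + 1) * (a + 1)! * (b + 1)! := hfac.symm
    _ = c * (a ! * b !) * (a + 1 + (b + 1)) := by
        rw [mul_right_comm c, h, Nat.factorial_succ, Nat.factorial_succ]; ring

/-- The number of cyclic shuffles of `[u]` and `[v]`, for bijective words
`u`, `v` on disjoint nonempty finite sets of integers of sizes `a`, `b`,
is `(a+b−1)! / ((a−1)!(b−1)!)`. -/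
theorem num_cyclic_shuffles (a b : ℕ) (ha : 0 < a) (hb : 0 < b)
    (u : Fin a → ℤ) (v : Fin b → ℤ)
    (hu : Function.Injective u) (hv : Function.Injective v)
    (hdisj : ∀ i j, u i ≠ v j) :
    Nat.card (Quot (RotRel (IsCyclicShuffle u v)))
      = (a + b - 1).factorial / ((a - 1).factorial * (b - 1).factorial) := by
  have : NeZero a := ⟨ha.ne'⟩
  have : NeZero b := ⟨hb.ne'⟩
  have hcyc : IsCyclicShuffle u v = IsShuffleOfRotations u v :=
    funext fun _ => propext (isCyclicShuffle_iff hdisj)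
  apply eq_factorial_div_of_mul_eq ha hb
  rw [hcyc, card_quot_rotRel_mul (fun _ hw k => hw.rotate hdisj k)
    (fun _ hw => hw.injective hu hv hdisj), card_isShuffleOfRotations hu hv hdisj]

end CQSym
end

section
/- For nonnegative integers m, n and arbitrary integers x, y, one has Σ_ℓ C(m−x+y, ℓ)·C(n+x−y, n−ℓ)·C(x+ℓ, m+n) = C(x, m)·C(y, n), where the sum is over 0 ≤ ℓ ≤ n. -/
open Finset

namespace CQSym

/-!
Expand `C(x+ℓ, m+n) = Σ_j C(x, m+n-j) C(ℓ, j)` by Vandermonde and exchange the sums. With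
`a = m-x+y`, `b = n+x-y`, trinomial revision `C(a,ℓ) C(ℓ,j) = C(a,j) C(a-j,ℓ-j)` and Vandermonde
collapse the `ℓ`-sum to `C(a,j) C(a+b-j, n-j)`, where `a + b = m + n` is a natural number. A second
trinomial revision turns `C(x, m+n-j) C(m+n-j, n-j)` into `C(x,m) C(x-m, n-j)`, and a last
Vandermonde sums `C(a,j) C(x-m, n-j)` to `C(a+x-m, n) = C(y, n)`.
-/

section BinomialRing

variable {R : Type*} [CommRing R] [BinomialRing R]

theorem sum_range_choose_mul_choose (r s : R) (N : ℕ) :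
    ∑ t ∈ range (N + 1), Ring.choose r t * Ring.choose s (N - t) = Ring.choose (r + s) N := by
  rw [Ring.add_choose_eq N (Commute.all r s), Nat.sum_antidiagonal_eq_sum_range_succ_mk]

theorem choose_mul_natChoose (r : R) {M K : ℕ} (h : K ≤ M) :
    Ring.choose r M * M.choose K = Ring.choose r K * Ring.choose (r - K) (M - K) := by
  rw [mul_comm, ← nsmul_eq_mul, Ring.choose_smul_choose r h]

theorem choose_add_mul_natChoose_right (r : R) (m k : ℕ) :
    Ring.choose r (m + k) * (m + k).choose k = Ring.choose r m * Ring.choose (r - m) k := by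
  rw [← Nat.choose_symm_add, choose_mul_natChoose r (Nat.le_add_right m k), Nat.add_sub_cancel_left]

theorem choose_add_natCast_eq_sum (r : R) {ℓ n : ℕ} (hℓ : ℓ ≤ n) (m : ℕ) :
    Ring.choose (r + ℓ) (m + n) = ∑ j ∈ range (n + 1), Ring.choose r (m + n - j) * ℓ.choose j := by
  rw [add_comm, ← sum_range_choose_mul_choose]
  have hsub : range (n + 1) ⊆ range (m + n + 1) := range_subset_range.2 (by omega)
  rw [← sum_subset hsub fun j _ hjn => ?_]
  · exact sum_congr rfl fun j _ => by rw [Ring.choose_natCast, mul_comm]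
  · rw [Ring.choose_natCast, Nat.choose_eq_zero_of_lt (by simp only [mem_range] at hjn; omega),
      Nat.cast_zero, zero_mul]

theorem sum_range_choose_mul_choose_mul_natChoose (a b : R) {j n : ℕ} (hj : j ≤ n) :
    ∑ ℓ ∈ range (n + 1), Ring.choose a ℓ * Ring.choose b (n - ℓ) * ℓ.choose j
      = Ring.choose a j * Ring.choose (a + b - j) (n - j) := by
  rw [← sum_range_add_sum_Ico _ (by omega : j ≤ n + 1), sum_Ico_eq_sum_range,
    show n + 1 - j = n - j + 1 by omega]
  have low : ∑ ℓ ∈ range j, Ring.choose a ℓ * Ring.choose b (n - ℓ) * ℓ.choose j = 0 :=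
    sum_eq_zero fun ℓ hℓ => by
      rw [Nat.choose_eq_zero_of_lt (mem_range.1 hℓ), Nat.cast_zero, mul_zero]
  have high : ∀ t ∈ range (n - j + 1),
      Ring.choose a (j + t) * Ring.choose b (n - (j + t)) * (j + t).choose j
        = Ring.choose a j * (Ring.choose (a - j) t * Ring.choose b (n - j - t)) := fun t _ => by
    rw [mul_right_comm, choose_mul_natChoose a (Nat.le_add_right j t), Nat.add_sub_cancel_left,
      Nat.sub_sub, mul_assoc]
  rw [low, zero_add, sum_congr rfl high, ← mul_sum, sum_range_choose_mul_choose,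
    sub_add_eq_add_sub, add_comm a b]

end BinomialRing

/-- The Pfaff–Saalschütz identity (GKP (5.28)):
`Σ_ℓ C(m−x+y, ℓ) C(n+x−y, n−ℓ) C(x+ℓ, m+n) = C(x, m) C(y, n)`. -/
theorem pfaff_saalschuetz (m n : ℕ) (x y : ℤ) :
    ∑ ℓ ∈ Finset.range (n + 1),
        Ring.choose ((m : ℤ) - x + y) ℓ * Ring.choose ((n : ℤ) + x - y) (n - ℓ) *
          Ring.choose (x + (ℓ : ℤ)) (m + n)
      = Ring.choose x m * Ring.choose y n := by
  set a : ℤ := m - x + y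
  set b : ℤ := n + x - y
  have hab : ∀ j ≤ n, a + b - j = ((m + (n - j) : ℕ) : ℤ) := fun j hj => by
    push_cast [Nat.cast_sub hj]; ring
  calc ∑ ℓ ∈ range (n + 1), Ring.choose a ℓ * Ring.choose b (n - ℓ) * Ring.choose (x + ℓ) (m + n)
      = ∑ ℓ ∈ range (n + 1), ∑ j ∈ range (n + 1),
          Ring.choose x (m + n - j) * (Ring.choose a ℓ * Ring.choose b (n - ℓ) * ℓ.choose j) :=
        sum_congr rfl fun ℓ hℓ => by
          rw [choose_add_natCast_eq_sum x (Nat.lt_succ_iff.1 (mem_range.1 hℓ)), mul_sum]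
          exact sum_congr rfl fun j _ => by ring
    _ = ∑ j ∈ range (n + 1), Ring.choose x (m + n - j) *
          ∑ ℓ ∈ range (n + 1), Ring.choose a ℓ * Ring.choose b (n - ℓ) * ℓ.choose j := by
        rw [sum_comm]; simp only [mul_sum]
    _ = ∑ j ∈ range (n + 1), Ring.choose x m * (Ring.choose a j * Ring.choose (x - m) (n - j)) :=
        sum_congr rfl fun j hj => by
          have hjn := Nat.lt_succ_iff.1 (mem_range.1 hj)
          rw [sum_range_choose_mul_choose_mul_natChoose a b hjn, hab j hjn, Ring.choose_natCast,
            show m + n - j = m + (n - j) by omega, mul_left_comm,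
            choose_add_mul_natChoose_right, mul_left_comm]
    _ = Ring.choose x m * Ring.choose y n := by
        rw [← mul_sum, sum_range_choose_mul_choose]
        congr 2
        ring

end CQSym
end

section
/- For any positive integer n and any subset J ⊆ [n], the fundamental cyclic quasi-symmetric function satisfies F^cyc_{n,J} = Σ_{i ∈ [n]} F_{n, (J−i) ∩ [n−1]}, where J − i is computed cyclically modulo n. -/
open Finset

namespace CQSym

/-! Fix the starting position `k` of a pair `(w, k)` counted by `F^cyc_{n,J}`. Reading `w` from
position `k` on gives a weakly increasing word whose forced strict ascents are the positions of
`J − k`, except the wrap-around ascent at position `n`, which the cyclic condition exempts and the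
intersection with `[n−1]` discards. Summing over `k` gives the formula, where `k = 0` plays the
role of `i = n` because `J − i` only depends on `i` modulo `n`. -/

lemma mem_support_wt {n : ℕ} (w : Fin n → ℕ+) (i : Fin n) : w i ∈ (wt w).support := by
  have hle : Finsupp.single (w i) 1 (w i) ≤ wt w (w i) := by
    simp only [wt, Finsupp.coe_finsetSum, Finset.sum_apply]
    exact Finset.single_le_sum (f := fun j => Finsupp.single (w j) 1 (w i))
      (fun j _ => Nat.zero_le _) (Finset.mem_univ i)
  rw [Finsupp.single_eq_same] at hle
  exact Finsupp.mem_support_iff.mpr (by omega)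

lemma finite_of_wt_eq {n : ℕ} {P : (Fin n → ℕ+) → Prop} (d : ℕ+ →₀ ℕ)
    (hP : ∀ w, P w → wt w = d) : Finite {w // P w} :=
  have hfin : (Set.univ.pi fun _ : Fin n => (d.support : Set ℕ+)).Finite :=
    Set.Finite.pi fun _ => d.support.finite_toSet
  (hfin.subset fun w hw i _ => hP w hw ▸ mem_support_wt w i).to_subtype

lemma wt_comp_equiv {n : ℕ} (w : Fin n → ℕ+) (σ : Equiv.Perm (Fin n)) : wt (w ∘ σ) = wt w :=
  Equiv.sum_comp σ fun i => Finsupp.single (w i) 1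

lemma cshift_zero {n : ℕ} {J : Finset ℕ} (hJ : 0 ∉ J) : cshift n J 0 = cshift n J n := by
  refine Finset.image_congr fun j hj => ?_
  have hj : 1 ≤ j := Nat.one_le_iff_ne_zero.mpr fun h => hJ (h ▸ hj)
  rw [show j + n - 0 - 1 = j - 1 + n by omega, show j + n - n - 1 = j - 1 by omega,
    Nat.add_mod_right]

lemma mem_cshift_iff {n i a : ℕ} {J : Finset ℕ} (hJ : J ⊆ Finset.Icc 1 n) (hi : i ≤ n)
    (ha : a < n) : a + 1 ∈ cshift n J i ↔ (a + i) % n + 1 ∈ J := by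
  simp only [cshift, Finset.mem_image, add_left_inj]
  constructor
  · rintro ⟨j, hjJ, rfl⟩
    have hj := Finset.mem_Icc.mp (hJ hjJ)
    rw [show j + n - i - 1 = j - 1 + (n - i) by omega, Nat.mod_add_mod,
      show j - 1 + (n - i) + i = j - 1 + n by omega, Nat.add_mod_right,
      Nat.mod_eq_of_lt (by omega), Nat.sub_add_cancel hj.1]
    exact hjJ
  · intro h
    refine ⟨_, h, ?_⟩
    rw [show (a + i) % n + 1 + n - i - 1 = (a + i) % n + (n - i) by omega, Nat.mod_add_mod,
      show a + i + (n - i) = a + n by omega, Nat.add_mod_right, Nat.mod_eq_of_lt ha]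

lemma sum_Icc_one_eq_sum_fin {M : Type*} [AddCommMonoid M] {n : ℕ} (f : ℕ → M)
    (hf : f 0 = f n) : ∑ i ∈ Finset.Icc 1 n, f i = ∑ k : Fin n, f k := by
  have hshift : ∑ i ∈ Finset.range n, f (i + 1) = ∑ i ∈ Finset.range n, f i := by
    cases n with
    | zero => rfl
    | succ m => rw [Finset.sum_range_succ, Finset.sum_range_succ', hf]
  rw [← Finset.Ico_add_one_right_eq_Icc, Finset.sum_Ico_eq_sum_range, Nat.add_sub_cancel,
    Fin.sum_univ_eq_sum_range]
  simpa only [add_comm 1] using hshift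

def cycFiber (n : ℕ) (J : Finset ℕ) (d : ℕ+ →₀ ℕ) (k : Fin n) : Set (Fin n → ℕ+) :=
  {w | Monotone (fun i => w (k + i)) ∧
    (∀ i : Fin n, (i : ℕ) + 1 ∈ J → i ≠ (finRotate n).symm k → w i < w (finRotate n i)) ∧
    wt w = d}

instance (n : ℕ) (J : Finset ℕ) (d : ℕ+ →₀ ℕ) (k : Fin n) : Finite (cycFiber n J d k) :=
  finite_of_wt_eq d fun _ hw => hw.2.2

lemma coeff_cFqsym (n : ℕ) (J : Finset ℕ) (d : ℕ+ →₀ ℕ) :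
    MvPowerSeries.coeff d (cFqsym n J) = ∑ k : Fin n, (Nat.card (cycFiber n J d k) : ℤ) := by
  rw [MvPowerSeries.coeff_apply, cFqsym, ← Nat.cast_sum, ← Nat.card_sigma]
  exact congrArg _ (Nat.card_congr ⟨fun p => ⟨p.1.2, p.1.1, p.2⟩,
    fun q => ⟨(q.2.1, q.1), q.2.2⟩, fun _ => rfl, fun _ => rfl⟩)

lemma ascent_at_cshift_iff {m : ℕ} {J : Finset ℕ} (hJ : J ⊆ Finset.Icc 1 (m + 1))
    (k a : Fin (m + 1)) :
    (a : ℕ) + 1 ∈ cshift (m + 1) J k ∩ Finset.Icc 1 m ↔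
      ((k + a : Fin (m + 1)) : ℕ) + 1 ∈ J ∧ k + a ≠ (finRotate (m + 1)).symm k := by
  rw [Finset.mem_inter, mem_cshift_iff hJ k.is_lt.le a.is_lt, Fin.val_add, add_comm (a : ℕ),
    Ne, Equiv.eq_symm_apply, finRotate_apply, Finset.mem_Icc, add_assoc, add_eq_left,
    ← Fin.last_add_one, add_left_inj, Fin.ext_iff, Fin.val_last]
  exact and_congr Iff.rfl (by omega)

lemma card_cycFiber {m : ℕ} {J : Finset ℕ} (hJ : J ⊆ Finset.Icc 1 (m + 1))
    (d : ℕ+ →₀ ℕ) (k : Fin (m + 1)) :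
    Nat.card (cycFiber (m + 1) J d k) =
    Nat.card {w : Fin (m + 1) → ℕ+ // Monotone w ∧
      (∀ i : Fin (m + 1), (i : ℕ) + 1 ∈ cshift (m + 1) J k ∩ Finset.Icc 1 m →
        w i < w (finRotate (m + 1) i)) ∧ wt w = d} := by
  refine Nat.card_congr (Equiv.subtypeEquiv
    ((Equiv.addLeft k).symm.arrowCongr (Equiv.refl ℕ+)) fun w => ?_)
  change _ ↔ Monotone (w ∘ Equiv.addLeft k) ∧
    (∀ i, _ → (w ∘ Equiv.addLeft k) i < (w ∘ Equiv.addLeft k) (finRotate (m + 1) i)) ∧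
    wt (w ∘ Equiv.addLeft k) = d
  rw [wt_comp_equiv]
  refine and_congr Iff.rfl (and_congr ?_ Iff.rfl)
  simp only [ascent_at_cshift_iff hJ, finRotate_apply, and_imp, Function.comp_apply,
    Equiv.coe_addLeft, ← add_assoc]
  exact ((Equiv.addLeft k).forall_congr_right).symm

theorem cFqsym_eq_sum_Fqsym_general (n : ℕ) (J : Finset ℕ)
    (hJ : J ⊆ Finset.Icc 1 n) :
    cFqsym n J
      = ∑ i ∈ Finset.Icc 1 n, Fqsym n (cshift n J i ∩ Finset.Icc 1 (n - 1)) := by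
  have h0 : 0 ∉ J := fun h => by simpa using hJ h
  ext d
  rw [coeff_cFqsym, sum_Icc_one_eq_sum_fin _ (by rw [cshift_zero h0]), map_sum]
  refine Finset.sum_congr rfl fun k _ => ?_
  obtain ⟨m, rfl⟩ : ∃ m, n = m + 1 := Nat.exists_eq_add_one_of_ne_zero k.pos.ne'
  rw [MvPowerSeries.coeff_apply, Fqsym, Nat.add_sub_cancel, card_cycFiber hJ]

/-- From fundamental to cyclic fundamental:
`F^cyc_{n,J} = Σ_{i ∈ [n]} F_{n, (J−i) ∩ [n−1]}`. -/
theorem cFqsym_eq_sum_Fqsym (n : ℕ) (hn : 0 < n) (J : Finset ℕ)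
    (hJ : J ⊆ Finset.Icc 1 n) :
    cFqsym n J
      = ∑ i ∈ Finset.Icc 1 n, Fqsym n (cshift n J i ∩ Finset.Icc 1 (n - 1)) :=
  cFqsym_eq_sum_Fqsym_general n J hJ

end CQSym
end

section
/- For any positive integer n and any subset J ⊆ [n], one has F^cyc_{n,J} = Σ_{K : J ⊆ K ⊆ [n]} M^cyc_{n,K}, and by inclusion–exclusion M^cyc_{n,J} = Σ_{K : J ⊆ K ⊆ [n]} (−1)^{#(K∖J)} F^cyc_{n,K}. -/
open Finset

namespace CQSym

/-! The pair `(w, k)` counted by `cFqsym n J` is counted by `cMqsym n K` for exactly one `K`: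
the cyclic strict ascents of `w` together with the position just before `k`, and this `K`
contains `J`. Hence `F^cyc_J = ∑_{K ⊇ J} M^cyc_K` coefficientwise, and the second identity is
Möbius inversion on the Boolean lattice, via `∑_{J ⊆ K ⊆ L} (-1)^{#(K \ J)} = [J = L]`. -/

theorem sum_Icc_neg_one_pow_card_sdiff {α : Type*} [DecidableEq α] {J L : Finset α}
    (h : J ⊆ L) : ∑ K ∈ Icc J L, (-1 : ℤ) ^ #(K \ J) = if J = L then 1 else 0 := by
  have hinj : Set.InjOn (J ∪ ·) (L \ J).powerset := fun A hA B hB hAB => by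
    rw [mem_coe, mem_powerset, subset_sdiff] at hA hB
    rw [← union_sdiff_cancel_left hA.2.symm, ← union_sdiff_cancel_left hB.2.symm]
    exact congrArg (· \ J) hAB
  have hcancel : ∀ A ∈ (L \ J).powerset, (J ∪ A) \ J = A := fun A hA =>
    union_sdiff_cancel_left (subset_sdiff.1 (mem_powerset.1 hA)).2.symm
  rw [Icc_eq_image_powerset h, sum_image hinj, sum_congr rfl fun A hA => by rw [hcancel A hA],
    sum_powerset_neg_one_pow_card]
  exact if_congr (sdiff_eq_empty_iff_subset.trans ⟨h.antisymm, fun hJL => hJL ▸ subset_rfl⟩) rfl rfl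

theorem eq_sum_neg_one_pow_smul_of_eq_sum_Icc {α M : Type*} [DecidableEq α] [AddCommGroup M]
    {s : Finset α} {f g : Finset α → M} (h : ∀ K ⊆ s, f K = ∑ L ∈ Icc K s, g L)
    {J : Finset α} (hJ : J ⊆ s) :
    g J = ∑ K ∈ Icc J s, (-1 : ℤ) ^ #(K \ J) • f K := by
  symm
  calc ∑ K ∈ Icc J s, (-1 : ℤ) ^ #(K \ J) • f K
      = ∑ K ∈ Icc J s, ∑ L ∈ Icc K s, (-1 : ℤ) ^ #(K \ J) • g L := by
        refine sum_congr rfl fun K hK => ?_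
        rw [h K (mem_Icc.1 hK).2, smul_sum]
    _ = ∑ L ∈ Icc J s, ∑ K ∈ Icc J L, (-1 : ℤ) ^ #(K \ J) • g L := by
        refine sum_comm' fun K L => ?_
        simp only [mem_Icc]
        exact ⟨fun h => ⟨⟨h.1.1, h.2.1⟩, h.1.1.trans h.2.1, h.2.2⟩,
          fun h => ⟨⟨h.1.1, h.1.2.trans h.2.2⟩, h.1.2, h.2.2⟩⟩
    _ = ∑ L ∈ Icc J s, if J = L then g L else 0 := by
        refine sum_congr rfl fun L hL => ?_
        rw [← sum_smul, sum_Icc_neg_one_pow_card_sdiff (mem_Icc.1 hL).1, ite_smul, one_smul,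
          zero_smul]
    _ = g J := by rw [sum_ite_eq, if_pos (mem_Icc.2 ⟨le_rfl, hJ⟩)]

theorem natCard_subset_eq_sum_Icc_natCard_eq {X α : Type*} [Finite X] [DecidableEq α]
    (κ : X → Finset α) {s : Finset α} (hκ : ∀ x, κ x ⊆ s) (J : Finset α) :
    Nat.card {x // J ⊆ κ x} = ∑ K ∈ Icc J s, Nat.card {x // κ x = K} := by
  classical
  have := Fintype.ofFinite X
  simp only [Nat.card_eq_fintype_card, Fintype.card_subtype]
  rw [card_eq_sum_card_fiberwise (f := κ) (t := Icc J s)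
    fun x hx => mem_Icc.2 ⟨(mem_filter.1 hx).2, hκ x⟩]
  refine sum_congr rfl fun K hK => ?_
  rw [filter_filter]
  congr 1
  exact filter_congr fun x _ => and_iff_right_of_imp fun hx => hx ▸ (mem_Icc.1 hK).1

theorem forall_mem_Icc_one_iff {n : ℕ} {P : ℕ → Prop} :
    (∀ j ∈ Icc 1 n, P j) ↔ ∀ i : Fin n, P (i + 1) := by
  refine ⟨fun h i => h _ (mem_Icc.2 ⟨by omega, i.isLt⟩), fun h j hj => ?_⟩
  obtain ⟨hj1, hjn⟩ := mem_Icc.1 hj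
  simpa [Nat.sub_add_cancel hj1] using h ⟨j - 1, by omega⟩

section CyclicAscents

variable {n : ℕ}

/-- The set `K` (with 1-based positions) for which `(w, k)` is counted by `cMqsym n K`:
the cyclic strict ascents of `w` together with the position just before `k`. -/
def cycAscentSet (p : (Fin n → ℕ+) × Fin n) : Finset ℕ :=
  ({i | i = (finRotate n).symm p.2 ∨ p.1 i < p.1 (finRotate n i)} : Finset (Fin n)).image
    fun i : Fin n => (i : ℕ) + 1

theorem succ_mem_cycAscentSet {p : (Fin n → ℕ+) × Fin n} {i : Fin n} :
    (i : ℕ) + 1 ∈ cycAscentSet p ↔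
      i = (finRotate n).symm p.2 ∨ p.1 i < p.1 (finRotate n i) := by
  simp [cycAscentSet, Fin.val_inj, eq_comm]

theorem cycAscentSet_subset_Icc (p : (Fin n → ℕ+) × Fin n) : cycAscentSet p ⊆ Icc 1 n := by
  intro j hj
  obtain ⟨i, -, rfl⟩ := mem_image.1 hj
  exact mem_Icc.2 ⟨by omega, i.isLt⟩

theorem subset_cycAscentSet_iff {J : Finset ℕ} (hJ : J ⊆ Icc 1 n) {p : (Fin n → ℕ+) × Fin n} :
    J ⊆ cycAscentSet p ↔ ∀ i : Fin n, (i : ℕ) + 1 ∈ J → i ≠ (finRotate n).symm p.2 →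
      p.1 i < p.1 (finRotate n i) := by
  have hsub : J ⊆ cycAscentSet p ↔ ∀ j ∈ Icc 1 n, j ∈ J → j ∈ cycAscentSet p :=
    ⟨fun h j _ hj => h hj, fun h j hj => h j (hJ hj) hj⟩
  rw [hsub, forall_mem_Icc_one_iff]
  simp only [succ_mem_cycAscentSet, or_iff_not_imp_left]

theorem cycAscentSet_eq_iff {K : Finset ℕ} (hK : K ⊆ Icc 1 n) {p : (Fin n → ℕ+) × Fin n} :
    cycAscentSet p = K ↔ ((((finRotate n).symm p.2 : Fin n) : ℕ) + 1 ∈ K ∧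
      ∀ i : Fin n, i ≠ (finRotate n).symm p.2 →
        ((i : ℕ) + 1 ∈ K ↔ p.1 i < p.1 (finRotate n i))) := by
  have heq : cycAscentSet p = K ↔ ∀ j ∈ Icc 1 n, (j ∈ cycAscentSet p ↔ j ∈ K) :=
    ⟨fun h _ _ => h ▸ Iff.rfl, fun h => Subset.antisymm
      (fun j hj => (h j (cycAscentSet_subset_Icc p hj)).1 hj) fun j hj => (h j (hK hj)).2 hj⟩
  rw [heq, forall_mem_Icc_one_iff]
  simp only [succ_mem_cycAscentSet]
  refine ⟨fun h => ⟨(h _).1 (Or.inl rfl), fun i hi => (h i).symm.trans (or_iff_right hi)⟩,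
    fun ⟨hk, hasc⟩ i => ?_⟩
  by_cases hi : i = (finRotate n).symm p.2
  · exact iff_of_true (Or.inl hi) (hi ▸ hk)
  · exact (or_iff_right hi).trans (hasc i hi).symm

theorem apply_mem_support_wt (w : Fin n → ℕ+) (i : Fin n) : w i ∈ (wt w).support := by
  rw [Finsupp.mem_support_iff, wt, Finsupp.finsetSum_apply]
  exact (sum_pos' (fun _ _ => Nat.zero_le _) ⟨i, mem_univ _, by simp⟩).ne'

theorem finite_setOf_wt_eq (d : ℕ+ →₀ ℕ) : {w : Fin n → ℕ+ | wt w = d}.Finite :=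
  (Set.Finite.pi fun _ => d.support.finite_toSet).subset
    fun w hw i _ => hw ▸ apply_mem_support_wt w i

variable (n) in
abbrev CycIncPair (d : ℕ+ →₀ ℕ) : Type :=
  {p : (Fin n → ℕ+) × Fin n // Monotone (fun i : Fin n => p.1 (p.2 + i)) ∧ wt p.1 = d}

instance (d : ℕ+ →₀ ℕ) : Finite (CycIncPair n d) :=
  ((finite_setOf_wt_eq d).prod Set.finite_univ |>.subset fun _ hp => ⟨hp.2, trivial⟩).to_subtype

theorem coeff_cFqsym_s8 {J : Finset ℕ} (hJ : J ⊆ Icc 1 n) (d : ℕ+ →₀ ℕ) :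
    MvPowerSeries.coeff d (cFqsym n J) = Nat.card {p : CycIncPair n d // J ⊆ cycAscentSet p.1} := by
  rw [MvPowerSeries.coeff_apply, cFqsym, Nat.cast_inj]
  refine Nat.card_congr ((Equiv.subtypeEquivRight fun p => ?_).trans
    (Equiv.subtypeSubtypeEquivSubtypeInter _ fun p => J ⊆ cycAscentSet p).symm)
  rw [subset_cycAscentSet_iff hJ]
  tauto

theorem coeff_cMqsym {K : Finset ℕ} (hK : K ⊆ Icc 1 n) (d : ℕ+ →₀ ℕ) :
    MvPowerSeries.coeff d (cMqsym n K) = Nat.card {p : CycIncPair n d // cycAscentSet p.1 = K} := by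
  rw [MvPowerSeries.coeff_apply, cMqsym, Nat.cast_inj]
  refine Nat.card_congr ((Equiv.subtypeEquivRight fun p => ?_).trans
    (Equiv.subtypeSubtypeEquivSubtypeInter _ fun p => cycAscentSet p = K).symm)
  rw [cycAscentSet_eq_iff hK]
  tauto

theorem cFqsym_eq_sum_cMqsym {J : Finset ℕ} (hJ : J ⊆ Icc 1 n) :
    cFqsym n J = ∑ K ∈ Icc J (Icc 1 n), cMqsym n K := by
  ext d
  rw [map_sum, coeff_cFqsym_s8 hJ, natCard_subset_eq_sum_Icc_natCard_eq _
    (fun p : CycIncPair n d => cycAscentSet_subset_Icc p.1), Nat.cast_sum]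
  exact sum_congr rfl fun K hK => (coeff_cMqsym (mem_Icc.1 hK).2 d).symm

end CyclicAscents

theorem cFqsym_cMqsym_inversion_general (n : ℕ) (J : Finset ℕ)
    (hJ : J ⊆ Finset.Icc 1 n) :
    cFqsym n J
        = ∑ K ∈ (Finset.Icc 1 n).powerset.filter (fun K => J ⊆ K), cMqsym n K
    ∧ cMqsym n J
        = ∑ K ∈ (Finset.Icc 1 n).powerset.filter (fun K => J ⊆ K),
            ((-1 : ℤ) ^ (K \ J).card) • cFqsym n K := by
  rw [← Icc_eq_filter_powerset]
  exact ⟨cFqsym_eq_sum_cMqsym hJ,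
    eq_sum_neg_one_pow_smul_of_eq_sum_Icc (fun K hK => cFqsym_eq_sum_cMqsym hK) hJ⟩

/-- Fundamental vs. monomial cyclic quasi-symmetric functions:
`F^cyc_{n,J} = Σ_{K ⊇ J} M^cyc_{n,K}` and, by inclusion–exclusion,
`M^cyc_{n,J} = Σ_{K ⊇ J} (−1)^{#(K∖J)} F^cyc_{n,K}`. -/
theorem cFqsym_cMqsym_inversion (n : ℕ) (hn : 0 < n) (J : Finset ℕ)
    (hJ : J ⊆ Finset.Icc 1 n) :
    cFqsym n J
        = ∑ K ∈ (Finset.Icc 1 n).powerset.filter (fun K => J ⊆ K), cMqsym n K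
    ∧ cMqsym n J
        = ∑ K ∈ (Finset.Icc 1 n).powerset.filter (fun K => J ⊆ K),
            ((-1 : ℤ) ^ (K \ J).card) • cFqsym n K :=
  cFqsym_cMqsym_inversion_general n J hJ

end CQSym
end

section
/- The map Ψ sending each monomial x_{i_1}^{m_1}···x_{i_k}^{m_k} (with i_1 < ... < i_k) to q^{i_k}, and 1 to 1, extended linearly, is a ring homomorphism from bounded-degree power series in x_1, x_2, ... to the ring Z[[q]]_⊙ whose underlying additive group is Z[[q]] and whose multiplication is determined by q^i ⊙ q^j = q^{max(i,j)}. -/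
open Finset

/-!
For `r : ℕ` let `S_r(f)` be the sum of the coefficients of `f` on the monomials in `x₁, …, x_r`,
i.e. `f(1, …, 1, 0, 0, …)` with `r` ones, a finite sum when `f` has bounded degree. The monomials
whose largest variable is `x_r` are exactly those sent to `q^r` by `Ψ`, so the partial sums of
`Ψ f` are `S_0(f), S_1(f), …`. Specialising variables is multiplicative, `S_r(fg) = S_r(f) S_r(g)`,
and `⊙` is precisely the product on `ℤ[[q]]` under which partial sums multiply. Since a power series
is determined by its partial sums, `Ψ(fg) = Ψ f ⊙ Ψ g`.
-/

namespace MvPowerSeries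

def TotalDegreeLE {σ R : Type*} [Semiring R] (f : MvPowerSeries σ R) (D : ℕ) : Prop :=
  ∀ d : σ →₀ ℕ, D < d.degree → coeff d f = 0

namespace TotalDegreeLE

variable {σ R : Type*} [Semiring R] {f g : MvPowerSeries σ R} {D E : ℕ}

theorem mono (hf : TotalDegreeLE f D) (h : D ≤ E) : TotalDegreeLE f E :=
  fun d hd => hf d (h.trans_lt hd)

theorem add (hf : TotalDegreeLE f D) (hg : TotalDegreeLE g D) : TotalDegreeLE (f + g) D :=
  fun d hd => by rw [map_add, hf d hd, hg d hd, add_zero]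

theorem mul (hf : TotalDegreeLE f D) (hg : TotalDegreeLE g E) :
    TotalDegreeLE (f * g) (D + E) := by
  classical
  intro d hd
  rw [coeff_mul]
  refine Finset.sum_eq_zero fun p hp => ?_
  rw [Finset.HasAntidiagonal.mem_antidiagonal] at hp
  have hdeg : p.1.degree + p.2.degree = d.degree := by rw [← map_add, hp]
  rcases lt_or_lt_of_add_lt_add (hdeg ▸ hd : D + E < p.1.degree + p.2.degree) with h | h
  · rw [hf _ h, zero_mul]
  · rw [hg _ h, mul_zero]

end TotalDegreeLE

theorem totalDegreeLE_one {σ R : Type*} [Semiring R] :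
    TotalDegreeLE (1 : MvPowerSeries σ R) 0 := by
  classical
  intro d hd
  rw [coeff_one, if_neg]
  rintro rfl
  simp at hd

end MvPowerSeries

namespace PowerSeries

theorem ext_of_sum_range_coeff_eq {R : Type*} [Ring R] {a b : PowerSeries R}
    (h : ∀ r, ∑ s ∈ Finset.range (r + 1), coeff s a = ∑ s ∈ Finset.range (r + 1), coeff s b) :
    a = b := by
  ext r
  cases r with
  | zero => simpa using h 0
  | succ r =>
    have h' := h (r + 1)
    rw [Finset.sum_range_succ, Finset.sum_range_succ _ (r + 1), h r] at h'
    exact add_left_cancel h'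

end PowerSeries

namespace CQSym

open MvPowerSeries (TotalDegreeLE totalDegreeLE_one)

noncomputable def maxIndex (d : ℕ+ →₀ ℕ) : ℕ := d.support.sup (↑)

theorem maxIndex_le_iff {d : ℕ+ →₀ ℕ} {r : ℕ} : maxIndex d ≤ r ↔ ∀ i ∈ d.support, (i : ℕ) ≤ r :=
  Finset.sup_le_iff

theorem maxIndex_eq_zero_iff {d : ℕ+ →₀ ℕ} : maxIndex d = 0 ↔ d = 0 := by
  rw [← nonpos_iff_eq_zero, maxIndex_le_iff, ← Finsupp.support_eq_empty,
    Finset.eq_empty_iff_forall_notMem]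
  exact forall_congr' fun i => by simp

@[simp]
theorem maxIndex_zero : maxIndex 0 = 0 :=
  maxIndex_eq_zero_iff.2 rfl

theorem maxIndex_add (a b : ℕ+ →₀ ℕ) : maxIndex (a + b) = max (maxIndex a) (maxIndex b) := by
  classical
  rw [maxIndex, Finsupp.support_add_eq_union, Finset.sup_union]
  rfl

theorem maxIndex_le_of_add_eq {a b d : ℕ+ →₀ ℕ} (h : a + b = d) :
    maxIndex a ≤ maxIndex d ∧ maxIndex b ≤ maxIndex d := by
  rw [← h, maxIndex_add]
  exact ⟨le_max_left _ _, le_max_right _ _⟩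

theorem maxIndex_eq_iff_of_ne_zero {d : ℕ+ →₀ ℕ} {r : ℕ} (hr : r ≠ 0) :
    maxIndex d = r ↔ ∃ m ∈ d.support, (∀ m' ∈ d.support, m' ≤ m) ∧ (m : ℕ) = r := by
  constructor
  · rintro rfl
    have hd : d.support.Nonempty :=
      Finsupp.support_nonempty_iff.2 (mt maxIndex_eq_zero_iff.2 hr)
    obtain ⟨m, hm, hsup⟩ := Finset.exists_mem_eq_sup _ hd ((↑) : ℕ+ → ℕ)
    exact ⟨m, hm, fun m' hm' => PNat.coe_le_coe _ _ |>.1 (hsup ▸ Finset.le_sup hm'), hsup.symm⟩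
  · rintro ⟨m, hm, hmax, rfl⟩
    exact le_antisymm (maxIndex_le_iff.2 fun m' hm' => hmax m' hm')
      (Finset.le_sup (f := ((↑) : ℕ+ → ℕ)) hm)

noncomputable def monomialsLE (r D : ℕ) : Finset (ℕ+ →₀ ℕ) :=
  {d ∈ ((Finset.range (r + 1)).preimage (↑) PNat.coe_injective.injOn).finsupp
      fun _ => Finset.range (D + 1) | d.degree ≤ D}

theorem mem_monomialsLE {r D : ℕ} {d : ℕ+ →₀ ℕ} :
    d ∈ monomialsLE r D ↔ maxIndex d ≤ r ∧ d.degree ≤ D := by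
  simp only [monomialsLE, Finset.mem_filter, Finset.mem_finsupp_iff, maxIndex_le_iff,
    Finset.subset_iff, Finset.mem_preimage, Finset.mem_range, Nat.lt_succ_iff]
  exact ⟨fun h => ⟨h.1.1, h.2⟩, fun h => ⟨⟨h.1, fun i _ => (d.le_degree i).trans h.2⟩, h.2⟩⟩

theorem zero_mem_monomialsLE (r D : ℕ) : 0 ∈ monomialsLE r D :=
  mem_monomialsLE.2 ⟨by simp, by simp⟩

theorem coeff_psi {f : MvPowerSeries ℕ+ ℤ} {D : ℕ} (hf : TotalDegreeLE f D) (r : ℕ) :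
    PowerSeries.coeff r (psi f) =
      ∑ d ∈ monomialsLE r D with maxIndex d = r, MvPowerSeries.coeff d f := by
  rw [psi, PowerSeries.coeff_mk]
  split_ifs with hr
  · subst hr
    have h0 : {d ∈ monomialsLE 0 D | maxIndex d = 0} = {0} := by
      ext d
      simp only [Finset.mem_filter, maxIndex_eq_zero_iff, Finset.mem_singleton]
      exact ⟨And.right, by rintro rfl; exact ⟨zero_mem_monomialsLE 0 D, rfl⟩⟩
    rw [h0, Finset.sum_singleton]
  · apply finsum_mem_eq_sum_of_inter_support_eq
    ext d
    simp only [Set.mem_inter_iff, Set.mem_ofPred_eq, Function.mem_support, Finset.coe_filter,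
      mem_monomialsLE, ← maxIndex_eq_iff_of_ne_zero hr]
    refine ⟨fun ⟨hd, hc⟩ => ⟨⟨⟨hd.le, not_lt.1 fun h => hc (hf d h)⟩, hd⟩, hc⟩,
      fun ⟨⟨_, hd⟩, hc⟩ => ⟨hd, hc⟩⟩

theorem sum_range_coeff_psi {f : MvPowerSeries ℕ+ ℤ} {D : ℕ} (hf : TotalDegreeLE f D) (r : ℕ) :
    ∑ s ∈ Finset.range (r + 1), PowerSeries.coeff s (psi f) =
      ∑ d ∈ monomialsLE r D, MvPowerSeries.coeff d f := by
  rw [← Finset.sum_fiberwise_of_maps_to (g := maxIndex) (t := Finset.range (r + 1))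
    fun d hd => Finset.mem_range.2 (Nat.lt_succ_of_le (mem_monomialsLE.1 hd).1)]
  refine Finset.sum_congr rfl fun s hs => ?_
  rw [coeff_psi hf]
  refine Finset.sum_congr (Finset.ext fun d => ?_) fun _ _ => rfl
  simp only [Finset.mem_filter, mem_monomialsLE, Finset.mem_range] at hs ⊢
  omega

theorem sum_monomialsLE_coeff_mul {R : Type*} [CommSemiring R] {f g : MvPowerSeries ℕ+ R}
    {D E : ℕ} (hf : TotalDegreeLE f D) (hg : TotalDegreeLE g E) (r : ℕ) :
    ∑ d ∈ monomialsLE r (D + E), MvPowerSeries.coeff d (f * g) =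
      (∑ a ∈ monomialsLE r D, MvPowerSeries.coeff a f) *
        ∑ b ∈ monomialsLE r E, MvPowerSeries.coeff b g := by
  classical
  have add_mem :
      ∀ p ∈ monomialsLE r D ×ˢ monomialsLE r E, p.1 + p.2 ∈ monomialsLE r (D + E) := by
    simp only [Finset.mem_product, mem_monomialsLE, maxIndex_add, map_add]
    omega
  rw [Finset.sum_mul_sum, ← Finset.sum_product', ← Finset.sum_fiberwise_of_maps_to add_mem]
  refine Finset.sum_congr rfl fun d hd => ?_
  rw [MvPowerSeries.coeff_mul]
  refine (Finset.sum_subset (fun p hp => ?_) fun p hp hp' => ?_).symm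
  · exact Finset.HasAntidiagonal.mem_antidiagonal.2 (Finset.mem_filter.1 hp).2
  · rw [Finset.HasAntidiagonal.mem_antidiagonal] at hp
    obtain ⟨ha, hb⟩ := maxIndex_le_of_add_eq hp
    have hdr := (mem_monomialsLE.1 hd).1
    simp only [Finset.mem_filter, Finset.mem_product, mem_monomialsLE, hp, and_true, not_and_or,
      not_le] at hp'
    rcases hp' with (h | h) | (h | h)
    · omega
    · rw [hf _ h, zero_mul]
    · omega
    · rw [hg _ h, mul_zero]

theorem sum_range_coeff_odot (a b : PowerSeries ℤ) (r : ℕ) :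
    ∑ s ∈ Finset.range (r + 1), PowerSeries.coeff s (odot a b) =
      (∑ s ∈ Finset.range (r + 1), PowerSeries.coeff s a) *
        ∑ s ∈ Finset.range (r + 1), PowerSeries.coeff s b := by
  induction r with
  | zero => simp [odot]
  | succ r ih =>
    rw [Finset.sum_range_succ _ (r + 1), ih]
    simp only [odot, PowerSeries.coeff_mk, Finset.sum_range_succ _ (r + 1)]
    ring

/-- `Ψ` is a ring homomorphism from bounded-degree power series to
`ℤ[[q]]_⊙`: it is additive, multiplicative (with respect to `⊙`) and unital. -/
theorem psi_ring_hom (f g : MvPowerSeries ℕ+ ℤ)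
    (hf : BoundedDeg f) (hg : BoundedDeg g) :
    psi (f + g) = psi f + psi g
    ∧ psi (f * g) = odot (psi f) (psi g)
    ∧ psi 1 = 1 := by
  obtain ⟨D, hD : TotalDegreeLE f D⟩ := hf
  obtain ⟨E, hE : TotalDegreeLE g E⟩ := hg
  refine ⟨PowerSeries.ext fun r => ?_, PowerSeries.ext_of_sum_range_coeff_eq fun r => ?_,
    PowerSeries.ext fun r => ?_⟩
  · have hD' := hD.mono (le_max_left D E)
    have hE' := hE.mono (le_max_right D E)
    rw [map_add, coeff_psi (hD'.add hE'), coeff_psi hD', coeff_psi hE', ← Finset.sum_add_distrib]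
    simp only [map_add]
  · rw [sum_range_coeff_odot, sum_range_coeff_psi hD, sum_range_coeff_psi hE,
      sum_range_coeff_psi (hD.mul hE), sum_monomialsLE_coeff_mul hD hE]
  · rw [coeff_psi (totalDegreeLE_one (R := ℤ)), PowerSeries.coeff_one]
    simp only [MvPowerSeries.coeff_one, Finset.sum_ite_eq', Finset.mem_filter,
      zero_mem_monomialsLE, maxIndex_zero, true_and, eq_comm]

end CQSym
end

section
/- Let A, B be disjoint finite sets of integers with |A| = m, |B| = n, and u ∈ S_A, v ∈ S_B with des(u) = i, des(v) = j. Then Σ_{w ∈ u ⧢ v} q^{des(w)} = (1−q)^{m+n+1}·Σ_r C(r+m−i, m)·C(r+n−j, n)·q^r as formal power series in q. -/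
/-!
Stanley's theory of P-partitions. Call `f : Fin N → {0, …, r}` compatible with a word `x`
with distinct letters if `f` is weakly increasing and strictly increasing at the descents of `x`.
Replacing `f t` by `f t + t - #(descents of x before t)` identifies these labelings with the
strictly increasing maps `Fin N → Fin (r + N - des x)`, so there are `C(r + N - des x, N)` of
them: the coefficient of `q^r` in `q^(des x) / (1 - q)^(N + 1)`.

A compatible labeling of a shuffle `w` of `u` and `v` restricts to compatible labelings of `u`
and of `v`. Conversely, listing the pairs `(label, letter)` of the letters of `u` and `v` in
lexicographic order recovers the shuffle `w` together with its labeling. Hence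
`Σ_w C(r + m + n - des w, m + n) = C(r + m - des u, m) * C(r + n - des v, n)` for every `r`,
which is the theorem read coefficientwise after dividing by `(1 - q)^(m + n + 1)`.
-/

open Finset

namespace Fin

variable {N : ℕ}

lemma strictMono_iff_monotone_sub_val {g : Fin N → ℤ} :
    StrictMono g ↔ Monotone fun t => g t - t := by
  rcases N with _ | N
  · exact iff_of_true (fun a => a.elim0) (fun a => a.elim0)
  simp only [strictMono_iff_lt_succ, monotone_iff_le_succ, val_succ, val_castSucc]
  exact forall_congr' fun i => by push_cast; omega

variable {L : ℕ} (g : Fin N ↪o Fin L)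

lemma monotone_val_orderEmbedding_sub_val : Monotone fun t => ((g t : ℕ) : ℤ) - t :=
  strictMono_iff_monotone_sub_val.1 (Nat.strictMono_cast.comp (val_strictMono.comp g.strictMono))

lemma val_le_orderEmbedding_apply (t : Fin N) : (t : ℕ) ≤ g t := by
  rcases N with _ | N
  · exact t.elim0
  have := monotone_val_orderEmbedding_sub_val g (zero_le t)
  simp only [val_zero, Nat.cast_zero, sub_zero] at this
  omega

lemma val_orderEmbedding_apply_add_le (t : Fin N) : (g t : ℕ) + N ≤ L + t := by
  rcases N with _ | N
  · exact t.elim0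
  have := monotone_val_orderEmbedding_sub_val g (le_last t)
  have := (g (last N)).isLt
  simp only [val_last] at *
  omega

end Fin

namespace PowerSeries

lemma X_pow_eq_one_sub_X_pow_mul_mk_choose {R : Type*} [CommRing R] {d N : ℕ} (hd : d ≤ N) :
    (X : R⟦X⟧) ^ d = (1 - X) ^ (N + 1) * mk fun r => ((r + N - d).choose N : R) := by
  have hshift : (mk fun r => ((r + N - d).choose N : R)) =
      X ^ d * mk fun r => ((N + r).choose N : R) := by
    ext r
    rw [coeff_mk, coeff_X_pow_mul']
    split_ifs with h
    · rw [coeff_mk, add_comm r, Nat.add_sub_assoc h]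
    · rw [Nat.choose_eq_zero_of_lt (by omega), Nat.cast_zero]
  rw [hshift, mul_left_comm, mul_comm ((1 - X) ^ _), mk_add_choose_mul_one_sub_pow_eq_one, mul_one]

end PowerSeries

namespace CQSym

section Compatible

variable {N : ℕ}

def descents (x : Fin N → ℤ) : Finset (Fin N) :=
  univ.filter fun i => (i : ℕ) + 1 < N ∧ x (finRotate N i) < x i

lemma card_descents (x : Fin N → ℤ) : (descents x).card = des x := rfl

lemma des_le (x : Fin N → ℤ) : des x ≤ N :=
  (card_descents x).symm.trans_le ((card_le_univ _).trans_eq (Fintype.card_fin N))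

def desBefore (x : Fin N → ℤ) (t : Fin N) : ℕ :=
  ((descents x).filter (· < t)).card

lemma desBefore_le_des (x : Fin N → ℤ) (t : Fin N) : desBefore x t ≤ des x :=
  (card_filter_le _ _).trans_eq (card_descents x)

lemma desBefore_le (x : Fin N → ℤ) (t : Fin N) : desBefore x t ≤ t :=
  calc _ ≤ (Iio t).card := card_le_card fun p => by simp
    _ = t := Fin.card_Iio t

lemma desBefore_last (x : Fin (N + 1) → ℤ) : desBefore x (Fin.last N) = des x := by
  rw [← card_descents]
  refine congrArg card (filter_true_of_mem fun i hi => ?_)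
  have := (mem_filter.1 hi).2.1
  rw [Fin.lt_def, Fin.val_last]
  omega

lemma desBefore_succ (x : Fin (N + 1) → ℤ) (i : Fin N) :
    desBefore x i.succ = desBefore x i.castSucc + if x i.succ < x i.castSucc then 1 else 0 := by
  have hmem : i.castSucc ∈ descents x ↔ x i.succ < x i.castSucc := by
    simp [descents, Fin.coeSucc_eq_succ]
  simp_rw [desBefore, ← Fin.le_castSucc_iff, le_iff_lt_or_eq, filter_or, filter_eq']
  by_cases h : x i.succ < x i.castSucc
  · rw [if_pos (hmem.2 h), if_pos h, card_union_of_disjoint (by simp), card_singleton]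
  · rw [if_neg (mt hmem.1 h), if_neg h, union_empty, add_zero]

def labeledWord {α : Type*} (x : Fin N → ℤ) (f : Fin N → α) : Fin N → α ×ₗ ℤ :=
  fun t => toLex (f t, x t)

variable {α : Type*} [LinearOrder α]

/-- When the letters of `x` are distinct: `f` is weakly increasing, strictly at every descent
of `x`. -/
def IsCompatible (x : Fin N → ℤ) (f : Fin N → α) : Prop := StrictMono (labeledWord x f)

variable {x : Fin N → ℤ}

lemma isCompatible_iff_monotone (hx : Function.Injective x) {r : ℕ} (f : Fin N → Fin (r + 1)) :
    IsCompatible x f ↔ Monotone fun t => (f t : ℤ) - desBefore x t := by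
  rcases N with _ | N
  · exact iff_of_true (fun a => a.elim0) (fun a => a.elim0)
  rw [IsCompatible, Fin.strictMono_iff_lt_succ, Fin.monotone_iff_le_succ]
  refine forall_congr' fun i => ?_
  have hne : x i.castSucc ≠ x i.succ := hx.ne Fin.castSucc_lt_succ.ne
  simp only [labeledWord, Prod.Lex.toLex_lt_toLex]
  rw [desBefore_succ, Fin.lt_def]
  split_ifs
  · push_cast; omega
  · push_cast; rw [Fin.ext_iff]; omega

lemma IsCompatible.sub_desBefore_add_des_le (hx : Function.Injective x) {r : ℕ}
    {f : Fin N → Fin (r + 1)} (hf : IsCompatible x f) (t : Fin N) :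
    (f t : ℤ) - desBefore x t + des x ≤ r := by
  rcases N with _ | N
  · exact t.elim0
  have := (isCompatible_iff_monotone hx f).1 hf (Fin.le_last t)
  have := (f (Fin.last N)).isLt
  simp only [desBefore_last] at *
  omega

noncomputable def compatibleEquiv (hx : Function.Injective x) (r : ℕ) :
    {f : Fin N → Fin (r + 1) // IsCompatible x f} ≃ (Fin N ↪o Fin (r + N - des x)) where
  toFun f := OrderEmbedding.ofStrictMono
    (fun t => ⟨f.1 t + t - desBefore x t, by
      have := f.2.sub_desBefore_add_des_le hx t
      have := desBefore_le x t
      omega⟩)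
    (by
      have hshift : StrictMono fun t => ((f.1 t : ℕ) : ℤ) - desBefore x t + t :=
        Fin.strictMono_iff_monotone_sub_val.2 <| by
          simpa using (isCompatible_iff_monotone hx f.1).1 f.2
      intro a b hab
      have := hshift hab
      have := desBefore_le x a
      have := desBefore_le x b
      rw [Fin.lt_def]
      simp only at *
      omega)
  invFun g := ⟨fun t => ⟨g t + desBefore x t - t, by
      have := Fin.val_orderEmbedding_apply_add_le g t
      have := desBefore_le_des x t
      omega⟩, by
    rw [isCompatible_iff_monotone hx]
    convert Fin.monotone_val_orderEmbedding_sub_val g using 2 with t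
    have := Fin.val_le_orderEmbedding_apply g t
    simp only
    omega⟩
  left_inv f := by
    ext t
    have := desBefore_le x t
    show (f.1 t : ℕ) + t - desBefore x t + desBefore x t - t = f.1 t
    omega
  right_inv g := by
    ext t
    have := Fin.val_le_orderEmbedding_apply g t
    show (g t : ℕ) + desBefore x t - t + t - desBefore x t = g t
    omega

lemma card_compatible (hx : Function.Injective x) (r : ℕ) :
    Nat.card {f : Fin N → Fin (r + 1) // IsCompatible x f} = (r + N - des x).choose N := by
  rw [Nat.card_congr ((compatibleEquiv hx r).trans Set.powersetCard.ofFinEmbEquiv),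
    Set.powersetCard.card, Nat.card_eq_fintype_card, Fintype.card_fin]

end Compatible

section Shuffle

variable {m n : ℕ} (u : Fin m → ℤ) (v : Fin n → ℤ) (S : Set.powersetCard (Fin (m + n)) m)

noncomputable def posLeft : Fin m ↪o Fin (m + n) :=
  (S : Finset (Fin (m + n))).orderEmbOfFin (Set.powersetCard.card_eq S)

lemma card_compl_powersetCard : (S : Finset (Fin (m + n)))ᶜ.card = n := by
  rw [card_compl, Set.powersetCard.card_eq S, Fintype.card_fin, Nat.add_sub_cancel_left]

noncomputable def posRight : Fin n ↪o Fin (m + n) :=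
  (S : Finset (Fin (m + n)))ᶜ.orderEmbOfFin (card_compl_powersetCard S)

lemma posLeft_mem (a : Fin m) : posLeft S a ∈ (S : Finset (Fin (m + n))) :=
  orderEmbOfFin_mem _ _ _

lemma posRight_notMem (b : Fin n) : posRight S b ∉ (S : Finset (Fin (m + n))) :=
  mem_compl.1 (orderEmbOfFin_mem _ _ _)

noncomputable def shufflePositions : Fin m ⊕ Fin n ≃ Fin (m + n) :=
  Equiv.ofBijective (Sum.elim (posLeft S) (posRight S)) <|
    (Fintype.bijective_iff_injective_and_card _).2
      ⟨(posLeft S).injective.sumElim (posRight S).injective fun a b h =>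
        posRight_notMem S b (h ▸ posLeft_mem S a), by simp⟩

lemma shufflePositions_inl (a : Fin m) : shufflePositions S (.inl a) = posLeft S a := rfl

lemma shufflePositions_inr (b : Fin n) : shufflePositions S (.inr b) = posRight S b := rfl

noncomputable def shuffleWord : Fin (m + n) → ℤ :=
  Sum.elim u v ∘ (shufflePositions S).symm

@[simp]
lemma shuffleWord_posLeft (a : Fin m) : shuffleWord u v S (posLeft S a) = u a := by
  simp [shuffleWord, ← shufflePositions_inl]

@[simp]
lemma shuffleWord_posRight (b : Fin n) : shuffleWord u v S (posRight S b) = v b := by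
  simp [shuffleWord, ← shufflePositions_inr]

lemma shuffleWord_comp_posLeft : shuffleWord u v S ∘ posLeft S = u :=
  funext (shuffleWord_posLeft u v S)

lemma shuffleWord_comp_posRight : shuffleWord u v S ∘ posRight S = v :=
  funext (shuffleWord_posRight u v S)

lemma isShuffle_shuffleWord : IsShuffle u v (shuffleWord u v S) := by
  refine ⟨posLeft S, posRight S, (posLeft S).strictMono, (posRight S).strictMono,
    shuffleWord_posLeft u v S, shuffleWord_posRight u v S, fun t => ?_⟩
  obtain ⟨a | b, rfl⟩ := (shufflePositions S).surjective t
  exacts [.inl ⟨a, rfl⟩, .inr ⟨b, rfl⟩]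

variable {u v}

lemma shuffleWord_apply_injective (hu : Function.Injective u) (hv : Function.Injective v)
    (hdisj : ∀ a b, u a ≠ v b) :
    Function.Injective (shuffleWord u v S) :=
  (hu.sumElim hv hdisj).comp (shufflePositions S).symm.injective

lemma shuffleWord_apply_mem_range_iff (hdisj : ∀ a b, u a ≠ v b) (t : Fin (m + n)) :
    shuffleWord u v S t ∈ Set.range u ↔ t ∈ (S : Finset (Fin (m + n))) := by
  obtain ⟨a | b, rfl⟩ := (shufflePositions S).surjective t
  · simpa [shufflePositions_inl] using posLeft_mem S a
  · simpa [shufflePositions_inr, posRight_notMem] using fun a => hdisj a b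

lemma shuffleWord_injective (hdisj : ∀ a b, u a ≠ v b) :
    Function.Injective (shuffleWord u v : Set.powersetCard (Fin (m + n)) m → _) := by
  intro S S' h
  ext t
  rw [← shuffleWord_apply_mem_range_iff S hdisj, h, shuffleWord_apply_mem_range_iff S' hdisj]

lemma exists_shuffleWord_eq (hdisj : ∀ a b, u a ≠ v b) {w : Fin (m + n) → ℤ}
    (hw : IsShuffle u v w) : ∃ S, shuffleWord u v S = w := by
  obtain ⟨f, g, hf, hg, hwf, hwg, -⟩ := hw
  let S : Set.powersetCard (Fin (m + n)) m := Set.powersetCard.ofCard (s := univ.image f)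
    (by rw [card_image_of_injective _ hf.injective, card_fin])
  have hfS : ⇑(posLeft S) = f :=
    (orderEmbOfFin_unique _ (fun a => mem_image_of_mem f (mem_univ a)) hf).symm
  have hgS : ⇑(posRight S) = g := by
    refine (orderEmbOfFin_unique _ (fun b => mem_compl.2 fun hb => ?_) hg).symm
    obtain ⟨a, -, ha⟩ := mem_image.1 hb
    exact hdisj a b (by rw [← hwf, ← hwg, ha])
  refine ⟨S, (shufflePositions S).surjective.injective_comp_right (funext fun p => ?_)⟩
  rcases p with a | b
  · change shuffleWord u v S (posLeft S a) = w (posLeft S a)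
    rw [shuffleWord_posLeft, hfS, hwf]
  · change shuffleWord u v S (posRight S b) = w (posRight S b)
    rw [shuffleWord_posRight, hgS, hwg]

lemma finsum_isShuffle {R : Type*} [AddCommMonoid R] (hdisj : ∀ a b, u a ≠ v b)
    (F : (Fin (m + n) → ℤ) → R) :
    ∑ᶠ (w) (_ : IsShuffle u v w), F w = ∑ S, F (shuffleWord u v S) := by
  have hrange : {w | IsShuffle u v w} = Set.range (shuffleWord u v) :=
    Set.ext fun w => ⟨fun hw => exists_shuffleWord_eq hdisj hw,
      by rintro ⟨S, rfl⟩; exact isShuffle_shuffleWord u v S⟩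
  change ∑ᶠ w ∈ {w | IsShuffle u v w}, F w = _
  rw [hrange, finsum_mem_range (shuffleWord_injective hdisj), finsum_eq_sum_of_fintype]

end Shuffle

section Merge

variable {α : Type*} [LinearOrder α] {m n : ℕ} {u : Fin m → ℤ} {v : Fin n → ℤ}
  {S : Set.powersetCard (Fin (m + n)) m}

lemma IsCompatible.comp_posLeft {f : Fin (m + n) → α}
    (hf : IsCompatible (shuffleWord u v S) f) :
    IsCompatible u (f ∘ posLeft S) := by
  rw [← shuffleWord_comp_posLeft u v S]
  exact (hf.comp (posLeft S).strictMono : StrictMono (labeledWord _ f ∘ posLeft S))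

lemma IsCompatible.comp_posRight {f : Fin (m + n) → α}
    (hf : IsCompatible (shuffleWord u v S) f) :
    IsCompatible v (f ∘ posRight S) := by
  rw [← shuffleWord_comp_posRight u v S]
  exact (hf.comp (posRight S).strictMono : StrictMono (labeledWord _ f ∘ posRight S))

lemma range_labeledWord_shuffleWord {β : Type*} (f : Fin (m + n) → β) :
    Set.range (labeledWord (shuffleWord u v S) f) =
      Set.range (labeledWord u (f ∘ posLeft S)) ∪
        Set.range (labeledWord v (f ∘ posRight S)) := by
  rw [← (shufflePositions S).surjective.range_comp, ← Set.Sum.elim_range]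
  congr 1
  ext (a | b) <;> simp [labeledWord, shufflePositions_inl, shufflePositions_inr]

variable (u v) in
noncomputable def restrictLabeling
    (p : Σ S : Set.powersetCard (Fin (m + n)) m,
      {f : Fin (m + n) → α // IsCompatible (shuffleWord u v S) f}) :
    {f : Fin m → α // IsCompatible u f} × {f : Fin n → α // IsCompatible v f} :=
  (⟨p.2.1 ∘ posLeft p.1, p.2.2.comp_posLeft⟩,
    ⟨p.2.1 ∘ posRight p.1, p.2.2.comp_posRight⟩)

lemma restrictLabeling_injective (hdisj : ∀ a b, u a ≠ v b) :
    Function.Injective (restrictLabeling (α := α) u v) := by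
  rintro ⟨S, f, hf⟩ ⟨S', f', hf'⟩ h
  simp only [restrictLabeling, Prod.mk.injEq, Subtype.mk.injEq] at h
  have hlabeled : labeledWord (shuffleWord u v S) f = labeledWord (shuffleWord u v S') f' :=
    (hf.range_inj hf').1 <| by
      rw [range_labeledWord_shuffleWord, range_labeledWord_shuffleWord, h.1, h.2]
  obtain rfl : S = S' := shuffleWord_injective hdisj <|
    funext fun t => congrArg (fun k => (ofLex k).2) (congrFun hlabeled t)
  obtain rfl : f = f' := funext fun t => congrArg (fun k => (ofLex k).1) (congrFun hlabeled t)
  rfl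

lemma exists_strictMono_range_eq_union (hdisj : ∀ a b, u a ≠ v b) {fu : Fin m → α}
    {fv : Fin n → α} (hfu : IsCompatible u fu) (hfv : IsCompatible v fv) :
    ∃ κ : Fin (m + n) → α ×ₗ ℤ, StrictMono κ ∧
      Set.range κ = Set.range (labeledWord u fu) ∪ Set.range (labeledWord v fv) := by
  classical
  let K := univ.image (labeledWord u fu) ∪ univ.image (labeledWord v fv)
  have hK : K.card = m + n := by
    rw [card_union_of_disjoint, card_image_of_injective _ hfu.injective,
      card_image_of_injective _ hfv.injective, card_fin, card_fin]
    simp only [disjoint_left, mem_image, mem_univ, true_and, not_exists, forall_exists_index,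
      forall_apply_eq_imp_iff]
    exact fun a b h => hdisj a b (congrArg (fun k => (ofLex k).2) h.symm)
  refine ⟨K.orderEmbOfFin hK, (K.orderEmbOfFin hK).strictMono, ?_⟩
  simp only [range_orderEmbOfFin, K, coe_union, coe_image, coe_univ, Set.image_univ]

lemma isShuffle_of_range_eq_union {κ : Fin (m + n) → α ×ₗ ℤ} (hκ : StrictMono κ)
    {fu : Fin m → α} {fv : Fin n → α} (hfu : IsCompatible u fu) (hfv : IsCompatible v fv)
    (hrange : Set.range κ = Set.range (labeledWord u fu) ∪ Set.range (labeledWord v fv)) :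
    IsShuffle u v fun t => (ofLex (κ t)).2 := by
  choose pu hpu using fun a => (hrange ▸ .inl ⟨a, rfl⟩ : labeledWord u fu a ∈ Set.range κ)
  choose pv hpv using fun b => (hrange ▸ .inr ⟨b, rfl⟩ : labeledWord v fv b ∈ Set.range κ)
  refine ⟨pu, pv, fun a b hab => hκ.lt_iff_lt.1 (by rw [hpu, hpu]; exact hfu hab),
    fun a b hab => hκ.lt_iff_lt.1 (by rw [hpv, hpv]; exact hfv hab),
    fun a => by simp [hpu, labeledWord], fun b => by simp [hpv, labeledWord], fun t => ?_⟩
  obtain ⟨a, ha⟩ | ⟨b, hb⟩ := (hrange ▸ Set.mem_range_self t : κ t ∈ _ ∪ _)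
  · exact .inl ⟨a, hκ.injective (by rw [hpu, ha])⟩
  · exact .inr ⟨b, hκ.injective (by rw [hpv, hb])⟩

lemma restrictLabeling_surjective (hu : Function.Injective u) (hv : Function.Injective v)
    (hdisj : ∀ a b, u a ≠ v b) : Function.Surjective (restrictLabeling (α := α) u v) := by
  rintro ⟨⟨fu, hfu⟩, ⟨fv, hfv⟩⟩
  obtain ⟨κ, hκ, hrange⟩ := exists_strictMono_range_eq_union hdisj hfu hfv
  obtain ⟨S, hS⟩ := exists_shuffleWord_eq hdisj (isShuffle_of_range_eq_union hκ hfu hfv hrange)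
  have hf : IsCompatible (shuffleWord u v S) fun t => (ofLex (κ t)).1 := hS ▸ hκ
  have hinj := shuffleWord_apply_injective S hu hv hdisj
  refine ⟨⟨S, _, hf⟩,
    Prod.ext (Subtype.ext (funext fun a => ?_)) (Subtype.ext (funext fun b => ?_))⟩
  · obtain ⟨t, ht⟩ : labeledWord u fu a ∈ Set.range κ := hrange ▸ .inl ⟨a, rfl⟩
    have : posLeft S a = t := hinj (by rw [shuffleWord_posLeft, hS]; simp [ht, labeledWord])
    simp [restrictLabeling, this, ht, labeledWord]
  · obtain ⟨t, ht⟩ : labeledWord v fv b ∈ Set.range κ := hrange ▸ .inr ⟨b, rfl⟩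
    have : posRight S b = t := hinj (by rw [shuffleWord_posRight, hS]; simp [ht, labeledWord])
    simp [restrictLabeling, this, ht, labeledWord]

lemma sum_card_compatible_shuffleWord [Finite α] (hu : Function.Injective u)
    (hv : Function.Injective v) (hdisj : ∀ a b, u a ≠ v b) :
    ∑ S, Nat.card {f : Fin (m + n) → α // IsCompatible (shuffleWord u v S) f} =
      Nat.card {f : Fin m → α // IsCompatible u f} *
        Nat.card {f : Fin n → α // IsCompatible v f} := by
  rw [← Nat.card_sigma, ← Nat.card_prod]
  exact Nat.card_congr (Equiv.ofBijective _
    ⟨restrictLabeling_injective hdisj, restrictLabeling_surjective hu hv hdisj⟩)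

end Merge

lemma sum_choose_des_shuffleWord {m n : ℕ} {u : Fin m → ℤ} {v : Fin n → ℤ}
    (hu : Function.Injective u) (hv : Function.Injective v) (hdisj : ∀ a b, u a ≠ v b)
    (r : ℕ) :
    ∑ S, (r + (m + n) - des (shuffleWord u v S)).choose (m + n) =
      (r + m - des u).choose m * (r + n - des v).choose n := by
  rw [← card_compatible hu r, ← card_compatible hv r,
    ← sum_card_compatible_shuffleWord hu hv hdisj]
  exact sum_congr rfl fun S _ =>
    (card_compatible (shuffleWord_apply_injective S hu hv hdisj) r).symm

/-- Distribution of the descent number over shuffles: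
`Σ_{w ∈ u⧢v} q^{des w} = (1−q)^{m+n+1}·Σ_r C(r+m−i, m)·C(r+n−j, n)·q^r`. -/
theorem des_distribution_shuffles (m n : ℕ) (u : Fin m → ℤ) (v : Fin n → ℤ)
    (hu : Function.Injective u) (hv : Function.Injective v)
    (hdisj : ∀ a b, u a ≠ v b) (i j : ℕ)
    (hi : des u = i) (hj : des v = j) :
    ∑ᶠ (w : Fin (m + n) → ℤ) (_ : IsShuffle u v w),
        (PowerSeries.X : PowerSeries ℤ) ^ des w
      = (1 - PowerSeries.X) ^ (m + n + 1) *
          PowerSeries.mk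
            (fun r => (((r + m - i).choose m * (r + n - j).choose n : ℕ) : ℤ)) := by
  subst hi hj
  rw [finsum_isShuffle hdisj, sum_congr rfl fun S _ =>
    PowerSeries.X_pow_eq_one_sub_X_pow_mul_mk_choose (des_le (shuffleWord u v S)), ← mul_sum]
  congr 1
  ext r
  simp only [map_sum, PowerSeries.coeff_mk, ← Nat.cast_sum,
    sum_choose_des_shuffleWord hu hv hdisj]

end CQSym
end

section
/- For every n ≥ 1 and every 0 ≤ k ≤ n−1, n·s_{(n−k,1^k)} = Σ_{J ⊆ [n], |J| > k} (−1)^{|J|−k−1}·F^cyc_{n,J}, where s_{(n−k,1^k)} is the Schur function of hook shape. -/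
/-!
Compare the coefficients of a monomial `x^d` of degree `n`, and let `u` be the weakly increasing
word of content `d`, with `s` distinct letters. A hook tableau of content `d` is determined by its
leg, which can be any `k`-subset of the letters other than the smallest one; so the left-hand side
contributes `n * C(s - 1, k)`. A summand of `F^cyc_{n,J}` of content `d` is a rotation of `u`,
by `m` say, and it occurs exactly when `J` lies in the set `S_m` of positions where a run of equal
letters of the rotated word ends (read cyclically from `m`); `|S_m| = s`. Exchanging the two sums,
each rotation contributes `∑_{J ⊆ S_m, |J| > k} (-1)^(|J|-k-1) = C(s - 1, k)`.
-/

open Finset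

namespace CQSym

section Weight

variable {n : ℕ}

lemma toMultiset_wt (w : Fin n → ℕ+) : Finsupp.toMultiset (wt w) = univ.val.map w := by
  simp only [wt, map_sum, Finsupp.toMultiset_single, one_smul]
  rw [← Multiset.sum_map_singleton (univ.val.map w), Multiset.map_map, Finset.sum_map_val]
  rfl

lemma degree_wt (w : Fin n → ℕ+) : (wt w).degree = n :=
  calc (wt w).degree = Multiset.card (Finsupp.toMultiset (wt w)) :=
        (Finsupp.card_toMultiset _).symm
    _ = n := by simp [toMultiset_wt]

lemma wt_apply (w : Fin n → ℕ+) (x : ℕ+) : wt w x = #{i | w i = x} := by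
  rw [← Finsupp.count_toMultiset, toMultiset_wt, Multiset.count_map, ← Finset.filter_val,
    card_val]
  simp only [eq_comm]

lemma support_wt (w : Fin n → ℕ+) : (wt w).support = univ.image w := by
  ext x
  rw [← Finsupp.mem_toMultiset, toMultiset_wt]
  simp

lemma wt_comp_perm (w : Fin n → ℕ+) (σ : Equiv.Perm (Fin n)) : wt (w ∘ σ) = wt w :=
  Fintype.sum_equiv σ _ _ fun _ => rfl

lemma eq_of_monotone_of_wt_eq {u v : Fin n → ℕ+} (hu : Monotone u) (hv : Monotone v)
    (h : wt u = wt v) : u = v := by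
  apply_fun Finsupp.toMultiset at h
  rw [toMultiset_wt, toMultiset_wt, Fin.univ_val_map, Fin.univ_val_map, Multiset.coe_eq_coe] at h
  exact List.ofFn_injective <|
    h.eq_of_sortedLE (List.sortedLE_ofFn_iff.2 hu) (List.sortedLE_ofFn_iff.2 hv)

lemma exists_monotone_wt_eq (d : ℕ+ →₀ ℕ) (hd : d.degree = n) :
    ∃ u : Fin n → ℕ+, Monotone u ∧ wt u = d := by
  set l := (Finsupp.toMultiset d).sort (· ≤ ·)
  obtain rfl : l.length = n := by
    rw [Multiset.length_sort, Finsupp.card_toMultiset, ← hd]; rfl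
  refine ⟨l.get, ?_, ?_⟩
  · rw [← List.sortedLE_ofFn_iff, List.ofFn_get]
    exact List.sortedLE_iff_pairwise.2 (Multiset.pairwise_sort _ _)
  · rw [← Finsupp.toMultiset_toFinsupp d, ← Finsupp.toMultiset_toFinsupp (wt _), toMultiset_wt,
      Fin.univ_val_map, List.ofFn_get, Multiset.sort_eq]

lemma wt_apply_of_injective {c : Fin n → ℕ+} (hc : Function.Injective c) (x : ℕ+) :
    wt c x = if x ∈ univ.image c then 1 else 0 := by
  rw [wt_apply]
  split_ifs with hx
  · obtain ⟨i, -, rfl⟩ := mem_image.1 hx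
    simp [hc.eq_iff, filter_eq']
  · simpa using hx

end Weight

section RunEnds

variable {α : Type*} [LinearOrder α] {n : ℕ}

def runEnds (u : Fin (n + 1) → α) : Finset (Fin (n + 1)) :=
  {t | t = Fin.last n ∨ u t < u (t + 1)}

lemma mem_runEnds_iff {u : Fin (n + 1) → α} (hu : Monotone u) {t : Fin (n + 1)} :
    t ∈ runEnds u ↔ ∀ t', t < t' → u t < u t' := by
  simp only [runEnds, mem_filter, mem_univ, true_and]
  constructor
  · rintro (rfl | hlt) t' ht'
    · exact absurd ht' (not_lt.2 (Fin.le_last t'))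
    · exact hlt.trans_le (hu (Fin.add_one_le_of_lt ht'))
  · intro h
    by_cases ht : t = Fin.last n
    · exact Or.inl ht
    · exact Or.inr (h _ (Fin.lt_add_one_iff.2 (Fin.lt_last_iff_ne_last.2 ht)))

lemma card_runEnds {u : Fin (n + 1) → α} (hu : Monotone u) : #(runEnds u) = #(univ.image u) := by
  have hinj : Set.InjOn u (runEnds u) := by
    intro t ht t' ht' h
    by_contra hne
    rcases lt_or_gt_of_ne hne with hlt | hlt
    · exact (((mem_runEnds_iff hu).1 ht _ hlt).ne h)
    · exact (((mem_runEnds_iff hu).1 ht' _ hlt).ne h.symm)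
  rw [← card_image_of_injOn hinj]
  congr 1
  refine Subset.antisymm (image_subset_image (subset_univ _)) ?_
  intro a ha
  obtain ⟨s, -, rfl⟩ := mem_image.1 ha
  have hne : ({t | u t = u s} : Finset (Fin (n + 1))).Nonempty := ⟨s, by simp⟩
  set t := max' _ hne
  have ht : u t = u s := (mem_filter.1 (max'_mem _ hne)).2
  refine mem_image.2 ⟨t, (mem_runEnds_iff hu).2 fun t' ht' => ?_, ht⟩
  refine (hu ht'.le).lt_of_ne fun h => ht'.not_ge ?_
  exact le_max' _ _ (by simp [← h, ht])

end RunEnds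

section ShiftedRunEnds

variable {α : Type*} [LinearOrder α] {n : ℕ}

/-- The run ends of `u`, as 1-based positions in the rotated word `fun i => u (i - m)`. -/
def shiftedRunEnds (u : Fin (n + 1) → α) (m : Fin (n + 1)) : Finset ℕ :=
  (runEnds u).image fun t => ((t + m : Fin (n + 1)) : ℕ) + 1

lemma card_shiftedRunEnds {u : Fin (n + 1) → α} (hu : Monotone u) (m : Fin (n + 1)) :
    #(shiftedRunEnds u m) = #(univ.image u) := by
  rw [shiftedRunEnds, card_image_of_injective _ fun a b h =>
    add_right_cancel (Fin.ext (by simpa using h)), card_runEnds hu]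

lemma shiftedRunEnds_nonempty (u : Fin (n + 1) → α) (m : Fin (n + 1)) :
    (shiftedRunEnds u m).Nonempty :=
  ⟨_, mem_image_of_mem _ (by simp [runEnds] : Fin.last n ∈ runEnds u)⟩

lemma shiftedRunEnds_subset_Icc (u : Fin (n + 1) → α) (m : Fin (n + 1)) :
    shiftedRunEnds u m ⊆ Icc 1 (n + 1) := by
  intro x hx
  obtain ⟨t, -, rfl⟩ := mem_image.1 hx
  simp [Nat.succ_le_of_lt (t + m).isLt]

lemma forall_lt_iff_subset_shiftedRunEnds {u : Fin (n + 1) → α} {m : Fin (n + 1)}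
    {J : Finset ℕ} (hJ : J ⊆ Icc 1 (n + 1)) :
    (∀ i : Fin (n + 1), (i : ℕ) + 1 ∈ J → i ≠ (finRotate (n + 1)).symm m →
      u (i - m) < u (finRotate (n + 1) i - m)) ↔ J ⊆ shiftedRunEnds u m := by
  have hlast : ∀ i : Fin (n + 1), i - m = Fin.last n ↔ i = m - 1 := by
    intro i
    rw [show Fin.last n = -1 from Fin.ext (by simp [Fin.coe_neg_one]), sub_eq_iff_eq_add,
      neg_add_eq_sub]
  simp only [finRotate_apply, finRotate_symm_apply]
  constructor
  · intro h x hx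
    obtain ⟨hx1, hxn⟩ := mem_Icc.1 (hJ hx)
    set i : Fin (n + 1) := ⟨x - 1, by omega⟩
    have hix : (i : ℕ) + 1 = x := by simp only [i]; omega
    refine mem_image.2 ⟨i - m, ?_, by rw [sub_add_cancel, hix]⟩
    simp only [runEnds, mem_filter, mem_univ, true_and]
    by_cases hi : i = m - 1
    · exact Or.inl ((hlast i).2 hi)
    · rw [sub_add_eq_add_sub]
      exact Or.inr (h i (hix ▸ hx) hi)
  · intro h i hi hne
    obtain ⟨t, ht, hti⟩ := mem_image.1 (h hi)
    obtain rfl : t = i - m := eq_sub_of_add_eq (Fin.ext (by omega))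
    simp only [runEnds, mem_filter, mem_univ, true_and] at ht
    rcases ht with ht | ht
    · exact absurd ((hlast i).1 ht) hne
    · rwa [sub_add_eq_add_sub] at ht

end ShiftedRunEnds

section CyclicCoefficients

variable {n : ℕ}

lemma eq_comp_sub_of_monotone {u w : Fin (n + 1) → ℕ+} {m : Fin (n + 1)} (hu : Monotone u)
    (hw : Monotone fun i => w (m + i)) (hwt : wt w = wt u) : w = fun i => u (i - m) := by
  have hwu : (fun i => w (m + i)) = u :=
    eq_of_monotone_of_wt_eq hw hu (by rw [← hwt]; exact wt_comp_perm w (Equiv.addLeft m))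
  funext i
  simpa using congrFun hwu (i - m)

lemma coeff_cFqsym_wt {u : Fin (n + 1) → ℕ+} (hu : Monotone u) {J : Finset ℕ}
    (hJ : J ⊆ Icc 1 (n + 1)) :
    MvPowerSeries.coeff (wt u) (cFqsym (n + 1) J) = #{m | J ⊆ shiftedRunEnds u m} := by
  have key : ∀ p : (Fin (n + 1) → ℕ+) × Fin (n + 1),
      (Monotone (fun i => p.1 (p.2 + i)) ∧
        (∀ i : Fin (n + 1), (i : ℕ) + 1 ∈ J → i ≠ (finRotate (n + 1)).symm p.2 →
          p.1 i < p.1 (finRotate (n + 1) i)) ∧ wt p.1 = wt u) ↔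
      p.1 = (fun i => u (i - p.2)) ∧ J ⊆ shiftedRunEnds u p.2 := by
    rintro ⟨w, m⟩
    dsimp only
    constructor
    · rintro ⟨hw, hcond, hwt⟩
      obtain rfl := eq_comp_sub_of_monotone hu hw hwt
      exact ⟨rfl, (forall_lt_iff_subset_shiftedRunEnds hJ).1 hcond⟩
    · rintro ⟨rfl, hJm⟩
      refine ⟨by simpa using hu, (forall_lt_iff_subset_shiftedRunEnds hJ).2 hJm, ?_⟩
      exact wt_comp_perm u (Equiv.subRight m)
  show (Nat.card _ : ℤ) = _
  rw [Nat.card_congr (Equiv.subtypeEquivRight key), ← Fintype.card_subtype,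
    ← Nat.card_eq_fintype_card]
  exact congrArg _ <| Nat.card_congr
    { toFun := fun p => ⟨p.1.2, p.2.2⟩
      invFun := fun m => ⟨(fun i => u (i - m), m), rfl, m.2⟩
      left_inv := by
        rintro ⟨⟨w, m⟩, hw, -⟩
        dsimp only at hw
        subst hw
        rfl
      right_inv := fun _ => rfl }

lemma coeff_cFqsym_of_degree_ne {d : ℕ+ →₀ ℕ} (hd : d.degree ≠ n) (J : Finset ℕ) :
    MvPowerSeries.coeff d (cFqsym n J) = 0 := by
  show (Nat.card _ : ℤ) = 0
  rw [Nat.card_eq_zero.2 (Or.inl ⟨fun ⟨⟨w, _⟩, _, _, hw⟩ => hd (hw ▸ degree_wt w)⟩),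
    Nat.cast_zero]

end CyclicCoefficients

section AlternatingSums

lemma alternating_sum_choose_le_eq_choose (b k : ℕ) :
    ∑ i ∈ range (b + 2), ((b + 1).choose i : ℤ) * (if i ≤ k then (-1) ^ i else 0) =
      (-1) ^ k * b.choose k := by
  set g : ℕ → ℤ := fun i => ((b + 1).choose i : ℤ) * (if i ≤ k then (-1) ^ i else 0)
  have hb_range : ∑ i ∈ range (b + 2), g i = ∑ i ∈ range (b + k + 2), g i :=
    sum_subset (range_subset_range.2 (by omega)) fun i _ hi => by
      simp [g, Nat.choose_eq_zero_of_lt (show b + 1 < i by simp at hi; omega)]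
  have hk_range : ∑ i ∈ range (k + 1), g i = ∑ i ∈ range (b + k + 2), g i :=
    sum_subset (range_subset_range.2 (by omega)) fun i _ hi => by
      simp [g, show ¬i ≤ k by simpa using hi]
  rw [hb_range, ← hk_range, ← Int.alternating_sum_range_choose_eq_choose]
  refine sum_congr rfl fun i hi => ?_
  simp only [g]
  rw [if_pos (Nat.lt_succ_iff.1 (mem_range.1 hi)), mul_comm]

lemma sum_powerset_filter_card_gt_neg_one_pow {α : Type*} {A : Finset α} (hA : A.Nonempty)
    (k : ℕ) :
    ∑ J ∈ A.powerset with k < #J, (-1 : ℤ) ^ (#J - k - 1) = (#A - 1).choose k := by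
  obtain ⟨b, hb⟩ : ∃ b, #A = b + 1 := Nat.exists_eq_add_one.2 hA.card_pos
  -- the full alternating sum vanishes, leaving its truncation at `k`
  have hsplit : ∀ j, (if k < j then (-1 : ℤ) ^ (j - k - 1) else 0) =
      -(-1) ^ k * (-1) ^ j + (-1) ^ k * (if j ≤ k then (-1) ^ j else 0) := by
    intro j
    split_ifs with h₁ h₂ h₂
    · omega
    · obtain ⟨i, rfl⟩ := Nat.exists_eq_add_of_lt h₁
      rw [show k + i + 1 - k - 1 = i by omega]
      ring_nf
      rw [(Even.neg_one_pow ⟨k, by ring⟩ : (-1 : ℤ) ^ (k * 2) = 1), mul_one]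
    · ring
    · omega
  rw [sum_filter, sum_powerset_apply_card fun j => if k < j then (-1 : ℤ) ^ (j - k - 1) else 0, hb]
  simp only [hsplit, smul_add, sum_add_distrib, nsmul_eq_mul, mul_left_comm _ (-(-1 : ℤ) ^ k),
    mul_left_comm _ ((-1 : ℤ) ^ k), ← mul_sum, mul_comm (((b + 1).choose _ : ℕ) : ℤ) ((-1) ^ _),
    Int.alternating_sum_range_choose_of_ne b.succ_ne_zero, mul_zero, zero_add]
  rw [alternating_sum_choose_le_eq_choose, ← mul_assoc, ← pow_add, Even.neg_one_pow ⟨k, rfl⟩,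
    one_mul, Nat.add_sub_cancel]

lemma sum_neg_one_pow_mul_card_subset {ι α : Type*} [Fintype ι] [DecidableEq α] (U : Finset α)
    {S : ι → Finset α} (hSU : ∀ i, S i ⊆ U) (hS : ∀ i, (S i).Nonempty) (k : ℕ) :
    ∑ J ∈ U.powerset with k < #J, (-1 : ℤ) ^ (#J - k - 1) * #{i | J ⊆ S i} =
      ∑ i, ((#(S i) - 1).choose k : ℤ) := by
  simp only [card_filter, Nat.cast_sum, mul_sum]
  rw [sum_comm]
  refine sum_congr rfl fun i _ => ?_
  rw [← sum_powerset_filter_card_gt_neg_one_pow (hS i)]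
  simp only [Nat.cast_ite, Nat.cast_one, Nat.cast_zero, mul_ite, mul_one, mul_zero, ← sum_filter,
    filter_filter]
  congr 1
  ext J
  simp only [mem_filter, mem_powerset]
  exact ⟨fun ⟨_, hk, hJ⟩ => ⟨hJ, hk⟩, fun ⟨hJ, hk⟩ => ⟨hJ.trans (hSU i), hk, hJ⟩⟩

end AlternatingSums

section HookTableaux

variable {n k : ℕ} {d : ℕ+ →₀ ℕ}

def HookTableau (n k : ℕ) (d : ℕ+ →₀ ℕ) : Type :=
  {p : (Fin (n - k) → ℕ+) × (Fin k → ℕ+) // Monotone p.1 ∧ StrictMono p.2 ∧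
    (∀ (h1 : 0 < n - k) (h2 : 0 < k), p.1 ⟨0, h1⟩ < p.2 ⟨0, h2⟩) ∧ wt p.1 + wt p.2 = d}

lemma coeff_hookSchur (n k : ℕ) (d : ℕ+ →₀ ℕ) :
    MvPowerSeries.coeff d (hookSchur n k) = Nat.card (HookTableau n k d) :=
  rfl

lemma HookTableau.degree_eq (hk : k ≤ n) (T : HookTableau n k d) : d.degree = n := by
  rw [← T.2.2.2.2, map_add, degree_wt, degree_wt, Nat.sub_add_cancel hk]

lemma HookTableau.leg_image_mem (hk : k < n) (hne : d.support.Nonempty) (T : HookTableau n k d) :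
    univ.image T.1.2 ∈ powersetCard k (d.support.erase (d.support.min' hne)) := by
  obtain ⟨⟨r, c⟩, -, hc, hrc, rfl⟩ := T
  have hsupp : ∀ {m} (w : Fin m → ℕ+) i, w i ∈ (wt w).support := by simp [support_wt]
  refine mem_powersetCard.2
    ⟨fun x hx => ?_, (card_image_of_injective _ hc.injective).trans (by simp)⟩
  obtain ⟨j, -, rfl⟩ := mem_image.1 hx
  have hk0 : 0 < n - k := by omega
  refine mem_erase.2 ⟨ne_of_gt ?_, Finsupp.support_mono le_add_self (hsupp c j)⟩
  calc _ ≤ r ⟨0, hk0⟩ := min'_le _ _ (Finsupp.support_mono le_self_add (hsupp r _))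
    _ < c ⟨0, j.pos⟩ := hrc hk0 j.pos
    _ ≤ c j := hc.monotone (Nat.zero_le j.val)

lemma HookTableau.ext_of_leg_image_eq {T T' : HookTableau n k d}
    (h : univ.image T.1.2 = univ.image T'.1.2) : T = T' := by
  have hcard : #(univ.image T'.1.2) = k := by simp [card_image_of_injective _ T'.2.2.1.injective]
  have hc : T.1.2 = T'.1.2 :=
    (orderEmbOfFin_unique hcard (fun i => h ▸ mem_image_of_mem _ (mem_univ i)) T.2.2.1).trans
      (orderEmbOfFin_unique hcard (fun i => mem_image_of_mem _ (mem_univ i)) T'.2.2.1).symm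
  have hr : T.1.1 = T'.1.1 := eq_of_monotone_of_wt_eq T.2.1 T'.2.1 <|
    add_right_cancel (T.2.2.2.2.trans (hc ▸ T'.2.2.2.2).symm)
  exact Subtype.ext (Prod.ext hr hc)

lemma HookTableau.exists_leg_image_eq (hk : k < n) (hd : d.degree = n) (hne : d.support.Nonempty)
    {C : Finset ℕ+} (hC : C ∈ powersetCard k (d.support.erase (d.support.min' hne))) :
    ∃ T : HookTableau n k d, univ.image T.1.2 = C := by
  set m₀ := d.support.min' hne
  obtain ⟨hCsub, hCcard⟩ := mem_powersetCard.1 hC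
  set c : Fin k → ℕ+ := ⇑(C.orderEmbOfFin hCcard)
  have hc : StrictMono c := (C.orderEmbOfFin hCcard).strictMono
  have hcC : univ.image c = C := image_orderEmbOfFin_univ C hCcard
  have hcd : wt c ≤ d := fun x => by
    rw [wt_apply_of_injective hc.injective, hcC]
    split_ifs with hx
    · exact Nat.one_le_iff_ne_zero.2 (Finsupp.mem_support_iff.1 (mem_of_mem_erase (hCsub hx)))
    · exact Nat.zero_le _
  obtain ⟨r, hr, hrw⟩ := exists_monotone_wt_eq (n := n - k) (d - wt c) (by
    have := congrArg Finsupp.degree (tsub_add_cancel_of_le hcd)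
    rw [map_add, degree_wt, hd] at this
    omega)
  have hm₀r : m₀ ∈ univ.image r := by
    have hm₀C : m₀ ∉ C := fun h => (mem_erase.1 (hCsub h)).1 rfl
    rw [← support_wt, hrw, Finsupp.mem_support_iff, Finsupp.tsub_apply,
      wt_apply_of_injective hc.injective, hcC, if_neg hm₀C, Nat.sub_zero]
    exact Finsupp.mem_support_iff.1 (min'_mem _ hne)
  refine ⟨⟨(r, c), hr, hc, fun h1 h2 => ?_, hrw ▸ tsub_add_cancel_of_le hcd⟩, hcC⟩
  obtain ⟨i, -, hi⟩ := mem_image.1 hm₀r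
  have hc0 := mem_erase.1 (hCsub (orderEmbOfFin_mem C hCcard ⟨0, h2⟩))
  calc r ⟨0, h1⟩ ≤ r i := hr (Nat.zero_le i.val)
    _ = m₀ := hi
    _ < c ⟨0, h2⟩ := lt_of_le_of_ne (min'_le _ _ hc0.2) (Ne.symm hc0.1)

theorem card_hookTableau (hk : k < n) (hd : d.degree = n) :
    Nat.card (HookTableau n k d) = (#d.support - 1).choose k := by
  have hne : d.support.Nonempty := by
    rw [nonempty_iff_ne_empty, Ne, Finsupp.support_eq_empty]
    rintro rfl
    simp at hd
    omega
  rw [← card_erase_of_mem (min'_mem _ hne), ← card_powersetCard, ← Nat.card_eq_finsetCard]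
  exact Nat.card_congr <| Equiv.ofBijective (fun T => ⟨_, T.leg_image_mem hk hne⟩)
    ⟨fun T T' h => HookTableau.ext_of_leg_image_eq (congrArg Subtype.val h),
      fun C => (HookTableau.exists_leg_image_eq hk hd hne C.2).imp fun _ h => Subtype.ext h⟩

end HookTableaux

theorem hook_schur_expansion_general (n k : ℕ) (hk : k ≤ n - 1) :
    n • hookSchur n k
      = ∑ J ∈ (Finset.Icc 1 n).powerset.filter (fun J => k < J.card),
          ((-1 : ℤ) ^ (J.card - k - 1)) • cFqsym n J := by
  rcases n with _ | n
  · simp [filter_singleton]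
  ext d
  simp only [map_nsmul, map_sum, map_zsmul, smul_eq_mul, coeff_hookSchur]
  by_cases hd : d.degree = n + 1
  · obtain ⟨u, hu, rfl⟩ := exists_monotone_wt_eq d hd
    rw [card_hookTableau (by omega) hd, sum_congr rfl fun J hJ => by
      rw [coeff_cFqsym_wt hu (mem_powerset.1 (mem_filter.1 hJ).1)],
      sum_neg_one_pow_mul_card_subset _ (shiftedRunEnds_subset_Icc u) (shiftedRunEnds_nonempty u)]
    simp [card_shiftedRunEnds hu, support_wt]
  · rw [Nat.card_eq_zero.2 (Or.inl ⟨fun T => hd (T.degree_eq (by omega))⟩)]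
    simp [coeff_cFqsym_of_degree_ne hd]

/-- Expansion of the hook Schur function:
`n·s_{(n−k,1^k)} = Σ_{J ⊆ [n], |J| > k} (−1)^{|J|−k−1} F^cyc_{n,J}`. -/
theorem hook_schur_expansion (n k : ℕ) (hn : 0 < n) (hk : k ≤ n - 1) :
    n • hookSchur n k
      = ∑ J ∈ (Finset.Icc 1 n).powerset.filter (fun J => k < J.card),
          ((-1 : ℤ) ^ (J.card - k - 1)) • cFqsym n J :=
  hook_schur_expansion_general n k hk

end CQSym
end
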